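/- arXiv:2209.06809 — 5 statements merged into one kernel-verified Lean document; each statement's English description precedes it below -/
import Mathlib

section
/- If L1 ⊆ Σ* is a context-free language and L2 ⊆ Σ* is a regular language over the same alphabet Σ, then the intersection L1 ∩ L2 is a context-free language. -/
/-!
Bar-Hillel's triple construction. Given a grammar `g` and a DFA `M`, the product grammar has
nonterminals `(q, A, p)`, meant to derive exactly the words that `A` derives and that drive `M`
from `q` to `p`, plus a fresh start symbol with a rule `S' → (start, S, f)` for each accepting
state `f`. Every rule `A → X₁ ⋯ Xₙ` of `g` is lifted along every chain of states
`q = q₀, …, qₙ = p` compatible with its terminals. Lifting sentential forms along such chains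
commutes with one-step rewriting in both directions, so derivations of `g` ending in a word `w`
correspond to derivations of the product grammar, with the chain through `w` forced to be the run
of `M` on `w`.
-/

lemma ContextFreeRule.rewrites_singleton_iff {T N : Type*} {r : ContextFreeRule T N}
    {A : N} {v : List (Symbol T N)} :
    r.Rewrites [.nonterminal A] v ↔ r.input = A ∧ v = r.output := by
  constructor
  · intro h
    obtain ⟨p, q, hu, rfl⟩ := h.exists_parts
    obtain ⟨rfl, hA, rfl⟩ : p = [] ∧ r.input = A ∧ q = [] := by
      simpa [List.singleton_eq_append_iff] using hu
    exact ⟨hA, by simp⟩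
  · rintro ⟨rfl, rfl⟩
    exact .input_output

namespace BarHillel

open ContextFreeGrammar ContextFreeRule

section

variable {σ α β : Type*} {R : σ → α → β → σ → Prop}

inductive Run (R : σ → α → β → σ → Prop) : σ → List α → List β → σ → Prop
  | nil (q : σ) : Run R q [] [] q
  | cons {q m q' : σ} {a : α} {b : β} {s : List α} {t : List β} :
      R q a b m → Run R m s t q' → Run R q (a :: s) (b :: t) q'

namespace Run

lemma singleton {q q' : σ} {a : α} {b : β} (h : R q a b q') : Run R q [a] [b] q' :=
  .cons h (.nil q')

lemma singleton_left_inv {q q' : σ} {a : α} {t : List β} (h : Run R q [a] t q') :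
    ∃ b, t = [b] ∧ R q a b q' := by
  obtain _ | ⟨hab, ⟨⟩⟩ := h
  exact ⟨_, rfl, hab⟩

lemma singleton_right_inv {q q' : σ} {s : List α} {b : β} (h : Run R q s [b] q') :
    ∃ a, s = [a] ∧ R q a b q' := by
  obtain _ | ⟨hab, ⟨⟩⟩ := h
  exact ⟨_, rfl, hab⟩

lemma append {q m q' : σ} {s₁ s₂ : List α} {t₁ t₂ : List β}
    (h₁ : Run R q s₁ t₁ m) (h₂ : Run R m s₂ t₂ q') : Run R q (s₁ ++ s₂) (t₁ ++ t₂) q' := by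
  induction h₁ with
  | nil => exact h₂
  | cons hab _ ih => exact .cons hab (ih h₂)

lemma exists_of_append_left {q q' : σ} {s₁ s₂ : List α} {t : List β}
    (h : Run R q (s₁ ++ s₂) t q') :
    ∃ t₁ t₂ m, t = t₁ ++ t₂ ∧ Run R q s₁ t₁ m ∧ Run R m s₂ t₂ q' := by
  induction s₁ generalizing q t with
  | nil => exact ⟨[], t, q, rfl, .nil q, h⟩
  | cons a s₁ ih =>
    obtain _ | ⟨hab, hrest⟩ := h
    obtain ⟨t₁, t₂, m, rfl, h₁, h₂⟩ := ih hrest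
    exact ⟨_ :: t₁, t₂, m, rfl, .cons hab h₁, h₂⟩

lemma exists_of_append_right {q q' : σ} {s : List α} {t₁ t₂ : List β}
    (h : Run R q s (t₁ ++ t₂) q') :
    ∃ s₁ s₂ m, s = s₁ ++ s₂ ∧ Run R q s₁ t₁ m ∧ Run R m s₂ t₂ q' := by
  induction t₁ generalizing q s with
  | nil => exact ⟨[], s, q, rfl, .nil q, h⟩
  | cons b t₁ ih =>
    obtain _ | ⟨hab, hrest⟩ := h
    obtain ⟨s₁, s₂, m, rfl, h₁, h₂⟩ := ih hrest
    exact ⟨_ :: s₁, s₂, m, rfl, .cons hab h₁, h₂⟩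

lemma finite_targets (hR : ∀ a, {b | ∃ q q', R q a b q'}.Finite) (s : List α) :
    {t | ∃ q q', Run R q s t q'}.Finite := by
  induction s with
  | nil =>
    refine (Set.finite_singleton []).subset ?_
    rintro t ⟨q, q', ⟨⟩⟩
    rfl
  | cons a s ih =>
    refine ((hR a).image2 List.cons ih).subset ?_
    rintro _ ⟨q, q', _ | ⟨hab, h⟩⟩
    exact ⟨_, ⟨q, _, hab⟩, _, ⟨_, q', h⟩, rfl⟩

end Run

end

section SymbolLift

variable {T σ N : Type*} (M : DFA T σ)

inductive SymbolLift : σ → Symbol T N → Symbol T (Option (σ × N × σ)) → σ → Prop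
  | terminal (q : σ) (a : T) : SymbolLift q (.terminal a) (.terminal a) (M.step q a)
  | nonterminal (q : σ) (A : N) (p : σ) :
      SymbolLift q (.nonterminal A) (.nonterminal (some (q, A, p))) p

variable {M}

lemma SymbolLift.nonterminal_right_inv {q q' : σ} {x : Symbol T N} {y : Option (σ × N × σ)}
    (h : SymbolLift M q x (.nonterminal y) q') :
    ∃ A, x = .nonterminal A ∧ y = some (q, A, q') := by
  cases h
  exact ⟨_, rfl, rfl⟩

lemma finite_symbolLift [Finite σ] (x : Symbol T N) :
    {y | ∃ q q', SymbolLift M q x y q'}.Finite := by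
  cases x with
  | terminal a =>
    refine (Set.finite_singleton (.terminal a)).subset ?_
    rintro _ ⟨q, q', ⟨⟩⟩
    rfl
  | nonterminal A =>
    refine (Set.finite_range fun qp : σ × σ =>
      (.nonterminal (some (qp.1, A, qp.2)) : Symbol T (Option (σ × N × σ)))).subset ?_
    rintro _ ⟨q, q', ⟨⟩⟩
    exact ⟨(q, q'), rfl⟩

lemma run_symbolLift_map_terminal_iff {q q' : σ} {s : List (Symbol T N)} {w : List T} :
    Run (SymbolLift M) q s (w.map .terminal) q' ↔
      s = w.map .terminal ∧ q' = M.evalFrom q w := by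
  constructor
  · induction w generalizing q s with
    | nil =>
      rintro ⟨⟩
      exact ⟨rfl, rfl⟩
    | cons a w ih =>
      rintro (_ | ⟨⟨⟩, h⟩)
      obtain ⟨rfl, rfl⟩ := ih h
      exact ⟨rfl, rfl⟩
  · rintro ⟨rfl, rfl⟩
    induction w generalizing q with
    | nil => exact .nil q
    | cons a w ih => exact .cons (.terminal q a) ih

end SymbolLift

section ProductGrammar

variable {T : Type*} {σ : Type} (g : ContextFreeGrammar T) (M : DFA T σ)

def productRules : Set (ContextFreeRule T (Option (σ × g.NT × σ))) :=
  {rl | ∃ f ∈ M.accept, rl = ⟨none, [.nonterminal (some (M.start, g.initial, f))]⟩} ∪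
  {rl | ∃ r ∈ g.rules, ∃ q q', rl.input = some (q, r.input, q') ∧
    Run (SymbolLift M) q r.output rl.output q'}

lemma finite_productRules [Finite σ] : (productRules g M).Finite := by
  refine .union ?_ ?_
  · refine (Set.finite_range fun f : σ =>
      (⟨none, [.nonterminal (some (M.start, g.initial, f))]⟩ :
        ContextFreeRule T (Option (σ × g.NT × σ)))).subset ?_
    rintro _ ⟨f, -, rfl⟩
    exact ⟨f, rfl⟩
  · have inputs := Set.finite_range fun x : {r // r ∈ g.rules} × σ × σ =>
      some (x.2.1, x.1.1.input, x.2.2)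
    have outputs := Set.Finite.biUnion g.rules.finite_toSet fun r _ =>
      Run.finite_targets (finite_symbolLift (M := M)) r.output
    refine (inputs.image2 ContextFreeRule.mk outputs).subset ?_
    rintro rl ⟨r, hr, q, q', hin, hout⟩
    exact ⟨_, ⟨(⟨r, hr⟩, q, q'), hin.symm⟩, _, Set.mem_biUnion hr ⟨q, q', hout⟩, rfl⟩

noncomputable def productGrammar [Finite σ] : ContextFreeGrammar T where
  NT := Option (σ × g.NT × σ)
  initial := none
  rules := (finite_productRules g M).toFinset

variable {g M} [Finite σ]

lemma mem_productGrammar_rules {rl : ContextFreeRule T (Option (σ × g.NT × σ))} :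
    rl ∈ (productGrammar g M).rules ↔ rl ∈ productRules g M :=
  Set.Finite.mem_toFinset _

lemma exists_produces_of_produces_lift {u : List (Symbol T g.NT)}
    {uh vh : List (Symbol T (Option (σ × g.NT × σ)))} {q q' : σ}
    (hp : (productGrammar g M).Produces uh vh) (hu : Run (SymbolLift M) q u uh q') :
    ∃ v, g.Produces u v ∧ Run (SymbolLift M) q v vh q' := by
  obtain ⟨rl, hrl, hrw⟩ := hp
  obtain ⟨ph, sh, rfl, rfl⟩ := hrw.exists_parts
  obtain ⟨px, s, m₂, rfl, hpx, hs⟩ := hu.exists_of_append_right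
  obtain ⟨p, xs, m₁, rfl, hp, hx⟩ := hpx.exists_of_append_right
  obtain ⟨x, rfl, hlift⟩ := hx.singleton_right_inv
  obtain ⟨A, rfl, hA⟩ := hlift.nonterminal_right_inv
  rcases mem_productGrammar_rules.1 hrl with ⟨f, -, rfl⟩ | ⟨r, hr, q₁, q₂, hin, hout⟩
  · cases hA
  · obtain ⟨rfl, rfl, rfl⟩ : m₁ = q₁ ∧ A = r.input ∧ m₂ = q₂ := by simpa using hA.symm.trans hin
    exact ⟨p ++ r.output ++ s, ⟨r, hr, rewrites_of_exists_parts r p s⟩, (hp.append hout).append hs⟩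

lemma exists_lift_produces_of_produces {u v : List (Symbol T g.NT)}
    {vh : List (Symbol T (Option (σ × g.NT × σ)))} {q q' : σ}
    (hp : g.Produces u v) (hv : Run (SymbolLift M) q v vh q') :
    ∃ uh, Run (SymbolLift M) q u uh q' ∧ (productGrammar g M).Produces uh vh := by
  obtain ⟨r, hr, hrw⟩ := hp
  obtain ⟨p, s, rfl, rfl⟩ := hrw.exists_parts
  obtain ⟨po, sh, m₂, rfl, hpo, hs⟩ := hv.exists_of_append_left
  obtain ⟨ph, oh, m₁, rfl, hp, ho⟩ := hpo.exists_of_append_left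
  have hrule : ⟨some (m₁, r.input, m₂), oh⟩ ∈ (productGrammar g M).rules :=
    mem_productGrammar_rules.2 (.inr ⟨r, hr, m₁, m₂, rfl, ho⟩)
  exact ⟨ph ++ [.nonterminal (some (m₁, r.input, m₂))] ++ sh,
    (hp.append (.singleton (.nonterminal m₁ r.input m₂))).append hs,
    ⟨_, hrule, rewrites_of_exists_parts _ ph sh⟩⟩

lemma exists_derives_of_derives_lift {u : List (Symbol T g.NT)}
    {uh vh : List (Symbol T (Option (σ × g.NT × σ)))} {q q' : σ}
    (hd : (productGrammar g M).Derives uh vh) (hu : Run (SymbolLift M) q u uh q') :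
    ∃ v, g.Derives u v ∧ Run (SymbolLift M) q v vh q' := by
  induction hd using Relation.ReflTransGen.head_induction_on generalizing u with
  | refl => exact ⟨u, .refl u, hu⟩
  | head hp _ ih =>
    obtain ⟨v, huv, hv⟩ := exists_produces_of_produces_lift hp hu
    obtain ⟨w, hvw, hw⟩ := ih hv
    exact ⟨w, huv.trans_derives hvw, hw⟩

lemma exists_lift_derives_of_derives {u v : List (Symbol T g.NT)}
    {vh : List (Symbol T (Option (σ × g.NT × σ)))} {q q' : σ}
    (hd : g.Derives u v) (hv : Run (SymbolLift M) q v vh q') :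
    ∃ uh, Run (SymbolLift M) q u uh q' ∧ (productGrammar g M).Derives uh vh := by
  induction hd using Relation.ReflTransGen.head_induction_on with
  | refl => exact ⟨vh, hv, Derives.refl (g := productGrammar g M) vh⟩
  | head huv _ ih =>
    obtain ⟨uh', hu', hd⟩ := ih
    obtain ⟨uh, hu, hp⟩ := exists_lift_produces_of_produces huv hu'
    exact ⟨uh, hu, hp.trans_derives hd⟩

variable (g M)

theorem language_productGrammar : (productGrammar g M).language = g.language ⊓ M.accepts := by
  ext w
  constructor
  · intro hw
    obtain hw | ⟨_, ⟨rl, hrl, hrw⟩, hd⟩ := hw.eq_or_head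
    · cases w <;> simp at hw
    obtain ⟨hin, rfl⟩ := ContextFreeRule.rewrites_singleton_iff.1 hrw
    rcases mem_productGrammar_rules.1 hrl with ⟨f, hf, rfl⟩ | ⟨r, -, q, q', hin', -⟩
    · obtain ⟨v, hSv, hv⟩ :=
        exists_derives_of_derives_lift hd (.singleton (.nonterminal M.start g.initial f))
      obtain ⟨rfl, rfl⟩ := run_symbolLift_map_terminal_iff.1 hv
      exact ⟨hSv, hf⟩
    · cases hin.symm.trans hin'
  · rintro ⟨hg, hM⟩
    obtain ⟨uh, hS, hd⟩ := exists_lift_derives_of_derives (M := M) (q := M.start) hg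
      (run_symbolLift_map_terminal_iff.2 ⟨rfl, rfl⟩)
    obtain ⟨_, rfl, ⟨⟩⟩ := hS.singleton_left_inv
    have hrule : ⟨none, [.nonterminal (some (M.start, g.initial, M.evalFrom M.start w))]⟩ ∈
        (productGrammar g M).rules :=
      mem_productGrammar_rules.2 (.inl ⟨_, hM, rfl⟩)
    exact Produces.trans_derives ⟨_, hrule, .input_output⟩ hd

end ProductGrammar

end BarHillel

open BarHillel in
/-- **Bar-Hillel, unweighted.**  The intersection of a context-free language
with a regular language is context-free. -/
theorem contextFree_inter_regular {T : Type} {L1 L2 : Language T}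
    (h1 : L1.IsContextFree) (h2 : L2.IsRegular) :
    (L1 ⊓ L2).IsContextFree := by
  obtain ⟨g, rfl⟩ := h1
  obtain ⟨σ, _, M, rfl⟩ := h2
  exact ⟨productGrammar g M, language_productGrammar g M⟩
end

section
/- Let G be a WCFG and A a WFSA over the same alphabet Σ and the same commutative semiring W, and let G∩ be the generalized Bar-Hillel grammar. For any nonterminal triplet (qI, S̄, q) of G∩ with qI ∈ I and q ∈ Q, there is a bijection ξ from the set D_{G∩}((qI,S̄,q)) of subderivations of G∩ rooted at (qI,S̄,q) to the weighted join D_G(S) ⋈ D_A({qI, q}); moreover for ξ(t∩) = ⟨t, π⟩ one has w(t∩) = w(t) ⊗ w̃(π) and yield(t∩) = yield(t) = yield(π). -/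
/-!
Common definitions: weighted context-free grammars (WCFGs), weighted
finite-state automata (WFSAs), leftmost derivations, paths and subpaths,
and the (generalized and original) Bar-Hillel intersection constructions.
-/

/-- A weighted production rule `X → α / w`. -/
structure Rule (T N K : Type*) where
  lhs : N
  rhs : List (T ⊕ N)
  wt  : K

/-- A weighted context-free grammar over terminals `T`, nonterminals `N`
and weights `K`. -/
structure WCFG (T N K : Type*) where
  start : N
  rules : Set (Rule T N K)

/-- A leftmost rewrite step `α ⇒_L β` using rule `r`: the leftmost
nonterminal of `α` (everything to its left is terminal) is rewritten by `r`. -/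
def StepL {T N K : Type*} (G : WCFG T N K) (r : Rule T N K)
    (α β : List (T ⊕ N)) : Prop :=
  r ∈ G.rules ∧ ∃ (z : List T) (δ : List (T ⊕ N)),
    α = (z.map Sum.inl) ++ (Sum.inr r.lhs :: δ) ∧
    β = (z.map Sum.inl) ++ r.rhs ++ δ

/-- `DerivesL G α rs x`: starting from sentential form `α` and applying the
rules `rs` by leftmost rewriting one reaches the terminal string `x`. -/
inductive DerivesL {T N K : Type*} (G : WCFG T N K) :
    List (T ⊕ N) → List (Rule T N K) → List T → Prop
  | refl (x : List T) : DerivesL G (x.map Sum.inl) [] x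
  | step {α β : List (T ⊕ N)} {r : Rule T N K} {rs : List (Rule T N K)}
      {x : List T} :
      StepL G r α β → DerivesL G β rs x → DerivesL G α (r :: rs) x

/-- A (sub)derivation of `G` starting from the sentential form `α`,
recorded as the sequence of applied rules together with its yield. -/
structure DerivFrom {T N K : Type*} (G : WCFG T N K) (α : List (T ⊕ N)) where
  rules : List (Rule T N K)
  yield : List T
  ok : DerivesL G α rules yield

/-- The weight of a derivation: the `⊗`-product of the weights of the
applied rules. -/
def DerivFrom.weight {T N K : Type*} [CommSemiring K] {G : WCFG T N K}
    {α : List (T ⊕ N)} (d : DerivFrom G α) : K :=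
  (d.rules.map Rule.wt).prod

/-- Derivations of `G` rooted at the nonterminal `X`.  (For `X = G.start`
these are exactly the derivations of `G`; note that at least one rule is
necessarily applied.) -/
abbrev Deriv {T N K : Type*} (G : WCFG T N K) (X : N) : Type _ :=
  DerivFrom G [Sum.inr X]

/-- A weighted arc `src --lab/wt--> dst`; `lab = none` represents an ε-arc. -/
structure Arc (T Q K : Type*) where
  src : Q
  lab : Option T
  wt  : K
  dst : Q

/-- A weighted finite-state automaton over terminals `T`, states `Q` and
weights `K`; `arcs` is a finite multiset of weighted arcs, and `init`/`final`
are the initial/final weight functions. -/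
structure WFSA (T Q K : Type*) where
  arcs : Multiset (Arc T Q K)
  init : Q → K
  final : Q → K

/-- `ChainFrom A p as q`: `as` is a sequence of arcs of `A` with matched
adjacent states, leading from state `p` to state `q`. -/
inductive ChainFrom {T Q K : Type*} (A : WFSA T Q K) :
    Q → List (Arc T Q K) → Q → Prop
  | nil (q : Q) : ChainFrom A q [] q
  | cons {a : Arc T Q K} {as : List (Arc T Q K)} {q : Q} :
      a ∈ A.arcs → ChainFrom A a.dst as q → ChainFrom A a.src (a :: as) q

/-- A subpath of `A` from state `p` to state `q` (possibly empty). -/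
structure SubPath {T Q K : Type*} (A : WFSA T Q K) (p q : Q) where
  arcs : List (Arc T Q K)
  ok : ChainFrom A p arcs q

/-- The yield of a subpath: the concatenation of its arc labels
(ε contributing nothing). -/
def SubPath.yield {T Q K : Type*} {A : WFSA T Q K} {p q : Q}
    (π : SubPath A p q) : List T :=
  π.arcs.filterMap Arc.lab

/-- The inner weight `w̃(π)` of a subpath: the `⊗`-product of its arc weights
(no initial/final weights; `1̄` if empty). -/
def SubPath.weight {T Q K : Type*} [CommSemiring K] {A : WFSA T Q K} {p q : Q}
    (π : SubPath A p q) : K :=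
  (π.arcs.map Arc.wt).prod

/-- An accepting path of `A`: a nonempty chained sequence of arcs starting at
an initial state (`init ≠ 0̄`) and ending at a final state (`final ≠ 0̄`). -/
structure FSAPath {T Q K : Type*} [Zero K] (A : WFSA T Q K) where
  src : Q
  dst : Q
  arcs : List (Arc T Q K)
  ne : arcs ≠ []
  chain : ChainFrom A src arcs dst
  src_init : A.init src ≠ 0
  dst_final : A.final dst ≠ 0

/-- The yield of a path: the concatenation of its arc labels. -/
def FSAPath.yield {T Q K : Type*} [Zero K] {A : WFSA T Q K} (π : FSAPath A) : List T :=
  π.arcs.filterMap Arc.lab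

/-- The weight of a path: `λ(q₀) ⊗ w₁ ⊗ ⋯ ⊗ w_N ⊗ ρ(q_N)`. -/
def FSAPath.weight {T Q K : Type*} [CommSemiring K] {A : WFSA T Q K}
    (π : FSAPath A) : K :=
  A.init π.src * (π.arcs.map Arc.wt).prod * A.final π.dst

/-- Middle symbols of Bar-Hillel triplet nonterminals: `N ∪ {S̄} ∪ Σ ∪ {ε}`. -/
inductive BHSym (T N : Type*) where
  | nt  : N → BHSym T N
  | bar : BHSym T N
  | term : T → BHSym T N
  | eps : BHSym T N

/-- Nonterminals of the Bar-Hillel grammar: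
`{S} ∪ Q × (N ∪ {S̄} ∪ Σ ∪ {ε}) × Q`. -/
inductive BHNT (T N Q : Type*) where
  | start : BHNT T N Q
  | trip : Q → BHSym T N → Q → BHNT T N Q

/-- View a grammar symbol (terminal or nonterminal) as a triplet middle
symbol. -/
def BHSym.ofSym {T N : Type*} : T ⊕ N → BHSym T N
  | Sum.inl a => BHSym.term a
  | Sum.inr X => BHSym.nt X

/-- View an arc label (`none` = ε) as a triplet middle symbol. -/
def BHSym.ofLab {T N : Type*} : Option T → BHSym T N
  | some a => BHSym.term a
  | none   => BHSym.eps

/-- The sentential form corresponding to the root symbol of a subderivation: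
a nonterminal root `X` gives `X`, a terminal root `a` gives `a`, and an
ε root gives the empty form. -/
def BHSym.form {T N : Type*} : BHSym T N → List (T ⊕ N)
  | BHSym.nt X => [Sum.inr X]
  | BHSym.term a => [Sum.inl a]
  | BHSym.eps => []
  | BHSym.bar => []

/-- Subderivations of `G` rooted at the symbol `s ∈ N ∪ Σ ∪ {ε}`:
for a nonterminal root at least one rule is applied; for a root in
`Σ ∪ {ε}` no rule is applied, the yield is the root symbol itself and the
weight is `1̄`. -/
abbrev SubDeriv {T N K : Type*} (G : WCFG T N K) (s : BHSym T N) : Type _ :=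
  DerivFrom G s.form

/-- `(q₀,X₁,q₁)(q₁,X₂,q₂)⋯(q_{M-1},X_M,q_M)` as a right-hand side of the
Bar-Hillel grammar, where the `Xᵢ` traverse `syms` and `q₁,…,q_M` traverse
`qs`. -/
def tripRHS {T N Q : Type*} : Q → List (T ⊕ N) → List Q → List (T ⊕ BHNT T N Q)
  | _, [], _ => []
  | _, _ :: _, [] => []
  | q0, s :: ss, q :: qs => Sum.inr (BHNT.trip q0 (BHSym.ofSym s) q) :: tripRHS q ss qs

section BarHillel

variable {T N Q K : Type*} [CommSemiring K]

/-- Rule schema (a): `S → (qI,S̄,qF) / λ(qI)⊗ρ(qF)` for `qI ∈ I`, `qF ∈ F`. -/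
def bhRulesStart (G : WCFG T N K) (A : WFSA T Q K) : Set (Rule T (BHNT T N Q) K) :=
  {r | ∃ qI qF : Q, A.init qI ≠ 0 ∧ A.final qF ≠ 0 ∧
    r = ⟨BHNT.start, [Sum.inr (BHNT.trip qI BHSym.bar qF)],
         A.init qI * A.final qF⟩}

/-- Rule schema (b): `(qI,S̄,q₁) → (qI,S̄,q₀)(q₀,ε,q₁) / 1̄` for `qI ∈ I`,
`q₀,q₁ ∈ Q`. -/
def bhRulesBar (G : WCFG T N K) (A : WFSA T Q K) : Set (Rule T (BHNT T N Q) K) :=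
  {r | ∃ qI q0 q1 : Q, A.init qI ≠ 0 ∧
    r = ⟨BHNT.trip qI BHSym.bar q1,
         [Sum.inr (BHNT.trip qI BHSym.bar q0), Sum.inr (BHNT.trip q0 BHSym.eps q1)],
         1⟩}

/-- Rule schema (c): `(qI,S̄,q₀) → (qI,S,q₀) / 1̄` for `qI ∈ I`, `q₀ ∈ Q`. -/
def bhRulesExit (G : WCFG T N K) (A : WFSA T Q K) : Set (Rule T (BHNT T N Q) K) :=
  {r | ∃ qI q0 : Q, A.init qI ≠ 0 ∧
    r = ⟨BHNT.trip qI BHSym.bar q0,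
         [Sum.inr (BHNT.trip qI (BHSym.nt G.start) q0)], 1⟩}

/-- Rule schema (d): `(q₀,X,q_M) → (q₀,X₁,q₁)⋯(q_{M-1},X_M,q_M) / w` for each
rule `X → X₁⋯X_M / w` of `G` with `M > 0` and all `q₀,…,q_M ∈ Q`. -/
def bhRulesCFG (G : WCFG T N K) (A : WFSA T Q K) : Set (Rule T (BHNT T N Q) K) :=
  {r | ∃ (r₀ : Rule T N K) (q0 : Q) (qs : List Q),
    r₀ ∈ G.rules ∧ r₀.rhs ≠ [] ∧ qs.length = r₀.rhs.length ∧
    r = ⟨BHNT.trip q0 (BHSym.nt r₀.lhs) (qs.getLastD q0),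
         tripRHS q0 r₀.rhs qs, r₀.wt⟩}

/-- Rule schema (e): `(q₀,X,q₀) → ε / w` for each rule `X → ε / w` of `G`
and `q₀ ∈ Q`. -/
def bhRulesNil (G : WCFG T N K) (A : WFSA T Q K) : Set (Rule T (BHNT T N Q) K) :=
  {r | ∃ (r₀ : Rule T N K) (q : Q), r₀ ∈ G.rules ∧ r₀.rhs = [] ∧
    r = ⟨BHNT.trip q (BHSym.nt r₀.lhs) q, [], r₀.wt⟩}

/-- Rule schema (f): `(q₀,a,q₁) → a / w` for each arc `q₀ --a/w--> q₁` of `A`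
with `a ∈ Σ ∪ {ε}`. -/
def bhRulesArc (G : WCFG T N K) (A : WFSA T Q K) : Set (Rule T (BHNT T N Q) K) :=
  {r | ∃ a : Arc T Q K, a ∈ A.arcs ∧
    r = ⟨BHNT.trip a.src (BHSym.ofLab a.lab) a.dst,
         a.lab.toList.map Sum.inl, a.wt⟩}

/-- Rule schema (g): `(q₀,a,q₂) → (q₀,ε,q₁)(q₁,a,q₂) / 1̄` for all `a ∈ Σ`
and `q₀,q₁,q₂ ∈ Q`. -/
def bhRulesArcEps (G : WCFG T N K) (A : WFSA T Q K) : Set (Rule T (BHNT T N Q) K) :=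
  {r | ∃ (t : T) (q0 q1 q2 : Q),
    r = ⟨BHNT.trip q0 (BHSym.term t) q2,
         [Sum.inr (BHNT.trip q0 BHSym.eps q1),
          Sum.inr (BHNT.trip q1 (BHSym.term t) q2)], 1⟩}

/-- The generalized Bar-Hillel intersection grammar `G∩` of a WCFG `G` and a
WFSA `A` (schemas (a)–(g)). -/
def BHGrammar (G : WCFG T N K) (A : WFSA T Q K) : WCFG T (BHNT T N Q) K :=
  ⟨BHNT.start,
    bhRulesStart G A ∪ bhRulesBar G A ∪ bhRulesExit G A ∪ bhRulesCFG G A ∪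
    bhRulesNil G A ∪ bhRulesArc G A ∪ bhRulesArcEps G A⟩

/-- Rule schema (a) of the original construction:
`S → (qI,S,qF) / λ(qI)⊗ρ(qF)` for `qI ∈ I`, `qF ∈ F`. -/
def obhRulesStart (G : WCFG T N K) (A : WFSA T Q K) : Set (Rule T (BHNT T N Q) K) :=
  {r | ∃ qI qF : Q, A.init qI ≠ 0 ∧ A.final qF ≠ 0 ∧
    r = ⟨BHNT.start, [Sum.inr (BHNT.trip qI (BHSym.nt G.start) qF)],
         A.init qI * A.final qF⟩}

/-- The original (Bar-Hillel / Nederhof–Satta) intersection grammar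
(schemas (a), (d), (e), (f)). -/
def OBHGrammar (G : WCFG T N K) (A : WFSA T Q K) : WCFG T (BHNT T N Q) K :=
  ⟨BHNT.start,
    obhRulesStart G A ∪ bhRulesCFG G A ∪ bhRulesNil G A ∪ bhRulesArc G A⟩

end BarHillel

/-!
The map `ξ` forgets the states: the rules of schemas (d) and (e) occurring in a subderivation of
`G∩`, read in order, form a leftmost derivation of `G`, and its rules of schema (f) are the arcs of
a path of `A` (`baseRule?`, `baseArc?`). Yields and weights are preserved because all other
schemas have weight `1̄` and produce no terminal.

To invert `ξ` one has to decide where the ε-arcs of the path go. Schema (g) attaches each ε-arc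
to the next labelled arc, and only the trailing ε-arcs are left to schema (b). Hence the part of
the path covered by a triplet `(p, X, p')` never ends in an ε-arc (`NoTrailingEps`), which fixes
how the path splits among the children of every rule; so `G∩` has exactly one subderivation
over each pair in the join.
-/

theorem List.map_inl_append_inr_cons_inj {T N : Type*} {z z' : List T} {X X' : N}
    {δ δ' : List (T ⊕ N)}
    (h : z.map Sum.inl ++ Sum.inr X :: δ = z'.map Sum.inl ++ Sum.inr X' :: δ') :
    z = z' ∧ X = X' ∧ δ = δ' := by
  induction z generalizing z' with
  | nil => cases z' <;> simp_all
  | cons a z ih =>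
    cases z' with
    | nil => simp at h
    | cons a' z' =>
      simp only [List.map_cons, List.cons_append, List.cons.injEq, Sum.inl.injEq] at h
      obtain ⟨rfl, h⟩ := h
      obtain ⟨rfl, rfl, rfl⟩ := ih h
      exact ⟨rfl, rfl, rfl⟩

theorem List.append_eq_map_inl_append_inr_cons {T N : Type*} {α β δ : List (T ⊕ N)}
    {z : List T} {X : N} (h : α ++ β = z.map Sum.inl ++ Sum.inr X :: δ) :
    (∃ w, α = z.map Sum.inl ++ Sum.inr X :: w ∧ δ = w ++ β) ∨
    (∃ z₁ z₂ : List T, z = z₁ ++ z₂ ∧ α = z₁.map Sum.inl ∧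
      β = z₂.map Sum.inl ++ Sum.inr X :: δ) := by
  rcases List.append_eq_append_iff.1 h with ⟨a', hz, rfl⟩ | ⟨c', rfl, hδ⟩
  · obtain ⟨z₁, z₂, rfl, rfl, rfl⟩ := List.map_eq_append_iff.1 hz
    exact Or.inr ⟨z₁, z₂, rfl, rfl, rfl⟩
  · cases c' with
    | nil => exact Or.inr ⟨z, [], by simp, by simp, by simpa using hδ.symm⟩
    | cons s w =>
      obtain ⟨rfl, rfl⟩ := List.cons.inj hδ
      exact Or.inl ⟨w, rfl, rfl⟩

namespace StepL

variable {T N K : Type*} {G : WCFG T N K}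

theorem right_unique {r : Rule T N K} {α β β' : List (T ⊕ N)}
    (h : StepL G r α β) (h' : StepL G r α β') : β = β' := by
  obtain ⟨-, z, δ, rfl, rfl⟩ := h
  obtain ⟨-, z', δ', hα, rfl⟩ := h'
  obtain ⟨rfl, -, rfl⟩ := List.map_inl_append_inr_cons_inj hα
  rfl

end StepL

namespace DerivesL

variable {T N K : Type*} {G : WCFG T N K}

theorem of_rule {r : Rule T N K} (hr : r ∈ G.rules) {rs : List (Rule T N K)} {x : List T}
    (h : DerivesL G r.rhs rs x) : DerivesL G [Sum.inr r.lhs] (r :: rs) x :=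
  .step ⟨hr, [], [], rfl, by simp⟩ h

theorem terminal_inv {z : List T} {rs : List (Rule T N K)} {x : List T}
    (h : DerivesL G (z.map Sum.inl) rs x) : rs = [] ∧ x = z := by
  generalize hα : z.map Sum.inl = α at h
  cases h with
  | refl y => exact ⟨rfl, (List.map_injective_iff.2 Sum.inl_injective hα).symm⟩
  | @step _ _ r _ _ hst =>
    obtain ⟨-, z', δ, rfl, -⟩ := hst
    have : (Sum.inr r.lhs : T ⊕ N) ∈ z.map Sum.inl := by rw [hα]; simp
    simp at this

theorem nil_inv {rs : List (Rule T N K)} {x : List T} (h : DerivesL G [] rs x) :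
    rs = [] ∧ x = [] :=
  terminal_inv (z := []) h

theorem singleton_inv {X : N} {rs : List (Rule T N K)} {x : List T}
    (h : DerivesL G [Sum.inr X] rs x) :
    ∃ r rs', rs = r :: rs' ∧ r ∈ G.rules ∧ r.lhs = X ∧ DerivesL G r.rhs rs' x := by
  generalize hα : [Sum.inr X] = α at h
  cases h with
  | refl => cases x <;> simp at hα
  | step hst hd =>
    obtain ⟨hr, z, δ, rfl, rfl⟩ := hst
    obtain ⟨rfl, rfl, rfl⟩ := List.map_inl_append_inr_cons_inj (z := []) (δ := []) hα
    exact ⟨_, _, rfl, hr, rfl, by simpa using hd⟩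

theorem append {α β : List (T ⊕ N)} {rs₁ rs₂ : List (Rule T N K)} {x₁ x₂ : List T}
    (h₁ : DerivesL G α rs₁ x₁) (h₂ : DerivesL G β rs₂ x₂) :
    DerivesL G (α ++ β) (rs₁ ++ rs₂) (x₁ ++ x₂) := by
  induction h₁ with
  | refl y =>
    induction h₂ with
    | refl z => simpa using refl (G := G) (y ++ z)
    | step hst _ ih =>
      obtain ⟨hr, z, δ, rfl, rfl⟩ := hst
      exact .step ⟨hr, y ++ z, δ, by simp, rfl⟩ (by simpa using ih)
  | step hst _ ih =>
    obtain ⟨hr, z, δ, rfl, rfl⟩ := hst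
    exact .step ⟨hr, z, δ ++ β, by simp, rfl⟩ (by simpa using ih)

theorem append_inv {α β : List (T ⊕ N)} {rs : List (Rule T N K)} {x : List T}
    (h : DerivesL G (α ++ β) rs x) :
    ∃ rs₁ rs₂ x₁ x₂, rs = rs₁ ++ rs₂ ∧ x = x₁ ++ x₂ ∧
      DerivesL G α rs₁ x₁ ∧ DerivesL G β rs₂ x₂ := by
  generalize hγ : α ++ β = γ at h
  induction h generalizing α β with
  | refl y =>
    obtain ⟨x₁, x₂, rfl, rfl, rfl⟩ := List.map_eq_append_iff.1 hγ.symm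
    exact ⟨[], [], x₁, x₂, rfl, rfl, refl _, refl _⟩
  | @step _ _ r _ _ hst _ ih =>
    obtain ⟨hr, z, δ, hα, rfl⟩ := hst
    rcases List.append_eq_map_inl_append_inr_cons (hγ.trans hα) with
      ⟨w, rfl, rfl⟩ | ⟨z₁, z₂, rfl, rfl, rfl⟩
    · obtain ⟨rs₁, rs₂, x₁, x₂, rfl, rfl, h₁, h₂⟩ :=
        ih (α := z.map Sum.inl ++ r.rhs ++ w) (β := β) (by simp)
      exact ⟨_ :: rs₁, rs₂, x₁, x₂, rfl, rfl, .step ⟨hr, z, w, rfl, rfl⟩ h₁, h₂⟩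
    · obtain ⟨rs₁, rs₂, x₁, x₂, rfl, rfl, h₁, h₂⟩ :=
        ih (α := z₁.map Sum.inl) (β := z₂.map Sum.inl ++ r.rhs ++ δ) (by simp)
      obtain ⟨rfl, rfl⟩ := h₁.terminal_inv
      exact ⟨[], _ :: rs₂, _, x₂, rfl, rfl, refl _, .step ⟨hr, z₂, δ, rfl, rfl⟩ h₂⟩

theorem eq_nil_of_append {α : List (T ⊕ N)} {rs ext : List (Rule T N K)} {x x' : List T}
    (h : DerivesL G α rs x) (h' : DerivesL G α (rs ++ ext) x') : ext = [] ∧ x' = x := by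
  induction h with
  | refl y => exact h'.terminal_inv
  | step hst _ ih =>
    cases h' with
    | step hst' hd' => exact ih (hst'.right_unique hst ▸ hd')

theorem yield_unique {α : List (T ⊕ N)} {rs : List (Rule T N K)} {x x' : List T}
    (h : DerivesL G α rs x) (h' : DerivesL G α rs x') : x = x' :=
  (h.eq_nil_of_append (ext := []) (by simpa using h')).2.symm

theorem left_unique_of_append_eq {α : List (T ⊕ N)} {rs₁ rs₂ rs₁' rs₂' : List (Rule T N K)}
    {x₁ x₁' : List T} (h : DerivesL G α rs₁ x₁) (h' : DerivesL G α rs₁' x₁')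
    (heq : rs₁ ++ rs₂ = rs₁' ++ rs₂') : rs₁ = rs₁' ∧ x₁ = x₁' := by
  rcases List.append_eq_append_iff.1 heq with ⟨c, rfl, -⟩ | ⟨c, rfl, -⟩
  · obtain ⟨rfl, rfl⟩ := h.eq_nil_of_append h'
    simp
  · obtain ⟨rfl, rfl⟩ := h'.eq_nil_of_append h
    simp

end DerivesL

theorem DerivFrom.ext_of_rules {T N K : Type*} {G : WCFG T N K} {α : List (T ⊕ N)}
    {d d' : DerivFrom G α} (h : d.rules = d'.rules) : d = d' := by
  obtain ⟨rs, x, hd⟩ := d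
  obtain ⟨rs', x', hd'⟩ := d'
  subst h
  obtain rfl := hd.yield_unique hd'
  rfl

namespace ChainFrom

variable {T Q K : Type*} {A : WFSA T Q K}

theorem singleton {a : Arc T Q K} (ha : a ∈ A.arcs) : ChainFrom A a.src [a] a.dst :=
  cons ha (nil _)

theorem append {p m r : Q} {as bs : List (Arc T Q K)}
    (h₁ : ChainFrom A p as m) (h₂ : ChainFrom A m bs r) : ChainFrom A p (as ++ bs) r := by
  induction h₁ with
  | nil => exact h₂
  | cons ha _ ih => exact cons ha (ih h₂)

theorem nil_inv {p r : Q} (h : ChainFrom A p ([] : List (Arc T Q K)) r) : r = p := by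
  cases h; rfl

theorem cons_inv {p r : Q} {a : Arc T Q K} {as : List (Arc T Q K)}
    (h : ChainFrom A p (a :: as) r) : a ∈ A.arcs ∧ p = a.src ∧ ChainFrom A a.dst as r := by
  cases h with
  | cons ha h => exact ⟨ha, rfl, h⟩

theorem append_inv {p r : Q} {as bs : List (Arc T Q K)} (h : ChainFrom A p (as ++ bs) r) :
    ∃ m, ChainFrom A p as m ∧ ChainFrom A m bs r := by
  induction as generalizing p with
  | nil => exact ⟨p, nil p, h⟩
  | cons a as ih =>
    obtain ⟨ha, rfl, h'⟩ := cons_inv h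
    obtain ⟨m, h₁, h₂⟩ := ih h'
    exact ⟨m, cons ha h₁, h₂⟩

theorem target_unique {p r r' : Q} {as : List (Arc T Q K)}
    (h : ChainFrom A p as r) (h' : ChainFrom A p as r') : r = r' := by
  induction h with
  | nil => exact (nil_inv h').symm
  | cons _ _ ih => exact ih (cons_inv h').2.2

end ChainFrom

theorem SubPath.ext_of_arcs {T Q K : Type*} {A : WFSA T Q K} {p q : Q} {π π' : SubPath A p q}
    (h : π.arcs = π'.arcs) : π = π' := by
  obtain ⟨as, _⟩ := π
  obtain ⟨as', _⟩ := π'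
  subst h
  rfl

def NoTrailingEps {T Q K : Type*} (as : List (Arc T Q K)) : Prop :=
  ∀ a ∈ as.getLast?, a.lab.isSome

namespace NoTrailingEps

variable {T Q K : Type*} {a : Arc T Q K} {as bs : List (Arc T Q K)}

theorem nil : NoTrailingEps ([] : List (Arc T Q K)) := by
  simp [NoTrailingEps]

theorem cons (h : NoTrailingEps as) (ha : as = [] → a.lab.isSome) :
    NoTrailingEps (a :: as) := by
  cases as with
  | nil => simpa [NoTrailingEps] using ha rfl
  | cons b bs => simpa [NoTrailingEps, List.getLast?_cons_cons] using h

theorem append (h₁ : NoTrailingEps as) (h₂ : NoTrailingEps bs) : NoTrailingEps (as ++ bs) := by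
  intro a ha
  rw [List.getLast?_append, Option.mem_def, Option.or_eq_some_iff] at ha
  rcases ha with ha | ⟨-, ha⟩
  exacts [h₂ a ha, h₁ a ha]

theorem of_append_right (h : NoTrailingEps (as ++ bs)) : NoTrailingEps bs := by
  intro a ha
  exact h a (by simp [List.getLast?_append, Option.mem_def.1 ha])

theorem not_iff : ¬ NoTrailingEps as ↔ ∃ pre e, as = pre ++ [e] ∧ e.lab = none := by
  rcases as.eq_nil_or_concat' with rfl | ⟨pre, e, rfl⟩ <;> simp [NoTrailingEps]

theorem eq_nil_of_filterMap_eq_nil (h : NoTrailingEps as) (hx : as.filterMap Arc.lab = []) :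
    as = [] := by
  rcases as.eq_nil_or_concat' with rfl | ⟨pre, e, rfl⟩
  · rfl
  · have he : e.lab = none := List.filterMap_eq_nil_iff.1 hx e (by simp)
    exact absurd h (not_iff.2 ⟨pre, e, rfl, he⟩)

theorem exists_split_of_filterMap_eq_append :
    ∀ {as : List (Arc T Q K)} {x₁ x₂ : List T}, as.filterMap Arc.lab = x₁ ++ x₂ →
    ∃ as₁ as₂, as = as₁ ++ as₂ ∧ as₁.filterMap Arc.lab = x₁ ∧ as₂.filterMap Arc.lab = x₂ ∧
      NoTrailingEps as₁
  | as, [], _, h => ⟨[], as, rfl, rfl, h, nil⟩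
  | [], _ :: _, _, h => by simp at h
  | a :: as, b :: x₁, x₂, h => by
    cases hl : a.lab with
    | none =>
      rw [List.filterMap_cons_none hl] at h
      obtain ⟨as₁, as₂, rfl, h₁, h₂, hn⟩ := exists_split_of_filterMap_eq_append h
      refine ⟨a :: as₁, as₂, rfl, by simpa [hl] using h₁, h₂, hn.cons ?_⟩
      rintro rfl; simp at h₁
    | some c =>
      rw [List.filterMap_cons_some hl, List.cons_append, List.cons.injEq] at h
      obtain ⟨as₁, as₂, rfl, h₁, h₂, hn⟩ := exists_split_of_filterMap_eq_append h.2
      exact ⟨a :: as₁, as₂, rfl, by simp [hl, h₁, h.1], h₂, hn.cons fun _ => by simp [hl]⟩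

theorem left_unique_of_append_eq {as₁ as₂ bs₁ bs₂ : List (Arc T Q K)}
    (heq : as₁ ++ as₂ = bs₁ ++ bs₂) (ha : NoTrailingEps as₁) (hb : NoTrailingEps bs₁)
    (hx : as₁.filterMap Arc.lab = bs₁.filterMap Arc.lab) : as₁ = bs₁ := by
  rcases List.append_eq_append_iff.1 heq with ⟨c, rfl, -⟩ | ⟨c, rfl, -⟩
  · rw [List.filterMap_append, eq_comm, List.append_right_eq_self] at hx
    simp [eq_nil_of_filterMap_eq_nil hb.of_append_right hx]
  · rw [List.filterMap_append, List.append_right_eq_self] at hx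
    simp [eq_nil_of_filterMap_eq_nil ha.of_append_right hx]

end NoTrailingEps

namespace BarHillel

section Rules

variable {T N Q K : Type*}

@[simp] theorem ofLab_eq_term_iff {l : Option T} {t : T} :
    (BHSym.ofLab l : BHSym T N) = .term t ↔ l = some t := by
  cases l <;> simp [BHSym.ofLab]

@[simp] theorem ofLab_eq_eps_iff {l : Option T} :
    (BHSym.ofLab l : BHSym T N) = .eps ↔ l = none := by
  cases l <;> simp [BHSym.ofLab]

@[simp] theorem ofLab_ne_nt (l : Option T) (X : N) : BHSym.ofLab l ≠ .nt X := by
  cases l <;> simp [BHSym.ofLab]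

@[simp] theorem ofLab_ne_bar (l : Option T) : (BHSym.ofLab l : BHSym T N) ≠ .bar := by
  cases l <;> simp [BHSym.ofLab]

/-- Schema (f). -/
def arcRule (a : Arc T Q K) : Rule T (BHNT T N Q) K :=
  ⟨.trip a.src (.ofLab a.lab) a.dst, a.lab.toList.map Sum.inl, a.wt⟩

/-- Schema (g). -/
def epsTermRule [One K] (q₀ : Q) (t : T) (q₁ q₂ : Q) : Rule T (BHNT T N Q) K :=
  ⟨.trip q₀ (.term t) q₂, [.inr (.trip q₀ .eps q₁), .inr (.trip q₁ (.term t) q₂)], 1⟩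

/-- Schema (e). -/
def nullRule (r : Rule T N K) (q : Q) : Rule T (BHNT T N Q) K :=
  ⟨.trip q (.nt r.lhs) q, [], r.wt⟩

/-- Schema (d). -/
def liftRule (r : Rule T N K) (q₀ : Q) (qs : List Q) : Rule T (BHNT T N Q) K :=
  ⟨.trip q₀ (.nt r.lhs) (qs.getLastD q₀), tripRHS q₀ r.rhs qs, r.wt⟩

/-- Schema (c). -/
def barStartRule [One K] (G : WCFG T N K) (qI p : Q) : Rule T (BHNT T N Q) K :=
  ⟨.trip qI .bar p, [.inr (.trip qI (.nt G.start) p)], 1⟩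

/-- Schema (b). -/
def barEpsRule [One K] (qI p₀ p₁ : Q) : Rule T (BHNT T N Q) K :=
  ⟨.trip qI .bar p₁, [.inr (.trip qI .bar p₀), .inr (.trip p₀ .eps p₁)], 1⟩

def baseSym? : T ⊕ BHNT T N Q → Option (T ⊕ N)
  | .inr (.trip _ (.nt X) _) => some (.inr X)
  | .inr (.trip _ (.term t) _) => some (.inl t)
  | _ => none

/-- The rule of `G` underlying a rule of schema (d) or (e). -/
def baseRule? (r : Rule T (BHNT T N Q) K) : Option (Rule T N K) :=
  match r.lhs with
  | .trip _ (.nt X) _ => some ⟨X, r.rhs.filterMap baseSym?, r.wt⟩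
  | _ => none

/-- The arc of `A` underlying a rule of schema (f). -/
def baseArc? (r : Rule T (BHNT T N Q) K) : Option (Arc T Q K) :=
  match r.lhs, r.rhs with
  | .trip p (.term t) p', [.inl _] => some ⟨p, some t, r.wt, p'⟩
  | .trip p .eps p', _ => some ⟨p, none, r.wt, p'⟩
  | _, _ => none

theorem filterMap_baseSym?_tripRHS :
    ∀ {q₀ : Q} {syms : List (T ⊕ N)} {qs : List Q}, qs.length = syms.length →
      (tripRHS q₀ syms qs).filterMap baseSym? = syms
  | _, [], [], _ => rfl
  | _, s :: ss, _ :: qs, h => by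
    cases s <;>
      simp [tripRHS, BHSym.ofSym, baseSym?, filterMap_baseSym?_tripRHS (qs := qs) (by simpa using h)]

@[simp] theorem baseRule?_arcRule (a : Arc T Q K) :
    baseRule? (arcRule a : Rule T (BHNT T N Q) K) = none := by
  rcases a with ⟨_, _ | _, _, _⟩ <;> rfl

@[simp] theorem baseRule?_epsTermRule [One K] (q₀ : Q) (t : T) (q₁ q₂ : Q) :
    baseRule? (epsTermRule q₀ t q₁ q₂ : Rule T (BHNT T N Q) K) = none := by
  simp [baseRule?, epsTermRule]

@[simp] theorem baseRule?_nullRule {r : Rule T N K} (hr : r.rhs = []) (q : Q) :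
    baseRule? (nullRule r q) = some r := by
  rcases r with ⟨_, _, _⟩; simp_all [baseRule?, nullRule]

@[simp] theorem baseRule?_liftRule {r : Rule T N K} {q₀ : Q} {qs : List Q}
    (h : qs.length = r.rhs.length) : baseRule? (liftRule r q₀ qs) = some r := by
  rcases r with ⟨_, _, _⟩; simp_all [baseRule?, liftRule, filterMap_baseSym?_tripRHS]

@[simp] theorem baseRule?_barStartRule [One K] (G : WCFG T N K) (qI p : Q) :
    baseRule? (barStartRule (Q := Q) G qI p) = none := by
  simp [baseRule?, barStartRule]

@[simp] theorem baseRule?_barEpsRule [One K] (qI p₀ p₁ : Q) :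
    baseRule? (barEpsRule qI p₀ p₁ : Rule T (BHNT T N Q) K) = none := by
  simp [baseRule?, barEpsRule]

@[simp] theorem baseArc?_arcRule (a : Arc T Q K) :
    baseArc? (arcRule a : Rule T (BHNT T N Q) K) = some a := by
  rcases a with ⟨_, _ | _, _, _⟩ <;> rfl

@[simp] theorem baseArc?_epsTermRule [One K] (q₀ : Q) (t : T) (q₁ q₂ : Q) :
    baseArc? (epsTermRule q₀ t q₁ q₂ : Rule T (BHNT T N Q) K) = none := by
  simp [baseArc?, epsTermRule]

@[simp] theorem baseArc?_nullRule (r : Rule T N K) (q : Q) : baseArc? (nullRule r q) = none := by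
  simp [baseArc?, nullRule]

@[simp] theorem baseArc?_liftRule (r : Rule T N K) (q₀ : Q) (qs : List Q) :
    baseArc? (liftRule r q₀ qs) = none := by
  simp [baseArc?, liftRule]

@[simp] theorem baseArc?_barStartRule [One K] (G : WCFG T N K) (qI p : Q) :
    baseArc? (barStartRule (Q := Q) G qI p) = none := by
  simp [baseArc?, barStartRule]

@[simp] theorem baseArc?_barEpsRule [One K] (qI p₀ p₁ : Q) :
    baseArc? (barEpsRule qI p₀ p₁ : Rule T (BHNT T N Q) K) = none := by
  simp [baseArc?, barEpsRule]

end Rules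

variable {T N Q K : Type*} [CommSemiring K] {G : WCFG T N K} {A : WFSA T Q K}

theorem arcRule_mem {a : Arc T Q K} (ha : a ∈ A.arcs) : arcRule a ∈ (BHGrammar G A).rules :=
  Or.inl (Or.inr ⟨a, ha, rfl⟩)

theorem epsTermRule_mem (q₀ : Q) (t : T) (q₁ q₂ : Q) :
    epsTermRule q₀ t q₁ q₂ ∈ (BHGrammar G A).rules :=
  Or.inr ⟨t, q₀, q₁, q₂, rfl⟩

theorem nullRule_mem {r : Rule T N K} (hr : r ∈ G.rules) (h : r.rhs = []) (q : Q) :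
    nullRule r q ∈ (BHGrammar G A).rules :=
  Or.inl (Or.inl (Or.inr ⟨r, q, hr, h, rfl⟩))

theorem liftRule_mem {r : Rule T N K} (hr : r ∈ G.rules) (h : r.rhs ≠ []) (q₀ : Q)
    {qs : List Q} (hqs : qs.length = r.rhs.length) : liftRule r q₀ qs ∈ (BHGrammar G A).rules :=
  Or.inl (Or.inl (Or.inl (Or.inr ⟨r, q₀, qs, hr, h, hqs, rfl⟩)))

theorem barStartRule_mem {qI : Q} (hqI : A.init qI ≠ 0) (p : Q) :
    barStartRule G qI p ∈ (BHGrammar G A).rules :=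
  Or.inl (Or.inl (Or.inl (Or.inl (Or.inr ⟨qI, p, hqI, rfl⟩))))

theorem barEpsRule_mem {qI : Q} (hqI : A.init qI ≠ 0) (p₀ p₁ : Q) :
    barEpsRule qI p₀ p₁ ∈ (BHGrammar G A).rules :=
  Or.inl (Or.inl (Or.inl (Or.inl (Or.inl (Or.inr ⟨qI, p₀, p₁, hqI, rfl⟩)))))

theorem rule_of_lhs_term {r : Rule T (BHNT T N Q) K} (hr : r ∈ (BHGrammar G A).rules)
    {p p' : Q} {t : T} (h : r.lhs = .trip p (.term t) p') :
    (∃ a ∈ A.arcs, a.lab = some t ∧ a.src = p ∧ a.dst = p' ∧ r = arcRule a) ∨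
      ∃ q, r = epsTermRule p t q p' := by
  rcases hr with ((((((⟨_, _, -, -, rfl⟩ | ⟨_, _, _, -, rfl⟩) | ⟨_, _, -, rfl⟩) |
    ⟨_, _, _, -, -, -, rfl⟩) | ⟨_, _, -, -, rfl⟩) | ⟨a, ha, rfl⟩) | ⟨_, _, _, _, rfl⟩) <;>
    simp at h
  · exact Or.inl ⟨a, ha, h.2.1, h.1, h.2.2, rfl⟩
  · obtain ⟨rfl, rfl, rfl⟩ := h
    exact Or.inr ⟨_, rfl⟩

theorem rule_of_lhs_eps {r : Rule T (BHNT T N Q) K} (hr : r ∈ (BHGrammar G A).rules)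
    {p p' : Q} (h : r.lhs = .trip p .eps p') :
    ∃ a ∈ A.arcs, a.lab = none ∧ a.src = p ∧ a.dst = p' ∧ r = arcRule a := by
  rcases hr with ((((((⟨_, _, -, -, rfl⟩ | ⟨_, _, _, -, rfl⟩) | ⟨_, _, -, rfl⟩) |
    ⟨_, _, _, -, -, -, rfl⟩) | ⟨_, _, -, -, rfl⟩) | ⟨a, ha, rfl⟩) | ⟨_, _, _, _, rfl⟩) <;>
    simp at h
  exact ⟨a, ha, h.2.1, h.1, h.2.2, rfl⟩

theorem rule_of_lhs_nt {r : Rule T (BHNT T N Q) K} (hr : r ∈ (BHGrammar G A).rules)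
    {p p' : Q} {X : N} (h : r.lhs = .trip p (.nt X) p') :
    (∃ r₀ ∈ G.rules, r₀.rhs = [] ∧ r₀.lhs = X ∧ p' = p ∧ r = nullRule r₀ p) ∨
      ∃ r₀ ∈ G.rules, ∃ qs : List Q, r₀.rhs ≠ [] ∧ qs.length = r₀.rhs.length ∧ r₀.lhs = X ∧
        p' = qs.getLastD p ∧ r = liftRule r₀ p qs := by
  rcases hr with ((((((⟨_, _, -, -, rfl⟩ | ⟨_, _, _, -, rfl⟩) | ⟨_, _, -, rfl⟩) |
    ⟨r₀, _, qs, hr₀, hne, hqs, rfl⟩) | ⟨r₀, _, hr₀, hnil, rfl⟩) | ⟨a, ha, rfl⟩) |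
    ⟨_, _, _, _, rfl⟩) <;> simp at h
  · obtain ⟨rfl, rfl, rfl⟩ := h
    exact Or.inr ⟨r₀, hr₀, qs, hne, hqs, rfl, by simp, rfl⟩
  · obtain ⟨rfl, rfl, rfl⟩ := h
    exact Or.inl ⟨r₀, hr₀, hnil, rfl, rfl, rfl⟩

theorem rule_of_lhs_bar {r : Rule T (BHNT T N Q) K} (hr : r ∈ (BHGrammar G A).rules)
    {p p' : Q} (h : r.lhs = .trip p .bar p') :
    (∃ q, r = barEpsRule p q p') ∨ r = barStartRule G p p' := by
  rcases hr with ((((((⟨_, _, -, -, rfl⟩ | ⟨_, _, _, -, rfl⟩) | ⟨_, _, -, rfl⟩) |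
    ⟨_, _, _, -, -, -, rfl⟩) | ⟨_, _, -, -, rfl⟩) | ⟨a, ha, rfl⟩) | ⟨_, _, _, _, rfl⟩) <;>
    simp at h
  · obtain ⟨rfl, rfl⟩ := h
    exact Or.inl ⟨_, rfl⟩
  · obtain ⟨rfl, rfl⟩ := h
    exact Or.inr rfl

theorem derivesL_arcRule {a : Arc T Q K} (ha : a ∈ A.arcs) :
    DerivesL (BHGrammar G A) [.inr (.trip a.src (.ofLab a.lab) a.dst)] [arcRule a]
      a.lab.toList :=
  .of_rule (arcRule_mem ha) (.refl _)

variable (A) in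
inductive CorrTerm (t : T) : Q → Q → List (Rule T (BHNT T N Q) K) → List (Arc T Q K) → Prop
  | arc {a : Arc T Q K} (ha : a ∈ A.arcs) (hl : a.lab = some t) :
      CorrTerm t a.src a.dst [arcRule a] [a]
  | eps {e : Arc T Q K} {q : Q} {rsc : List (Rule T (BHNT T N Q) K)} {as : List (Arc T Q K)}
      (he : e ∈ A.arcs) (hl : e.lab = none) (h : CorrTerm t e.dst q rsc as) :
      CorrTerm t e.src q (epsTermRule e.src t e.dst q :: arcRule e :: rsc) (e :: as)

namespace CorrTerm

variable {t : T} {q₀ q₁ : Q} {rsc : List (Rule T (BHNT T N Q) K)} {as : List (Arc T Q K)}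

theorem chainFrom (h : CorrTerm A t q₀ q₁ rsc as) : ChainFrom A q₀ as q₁ := by
  induction h with
  | arc ha => exact .singleton ha
  | eps he _ _ ih => exact .cons he ih

theorem filterMap_lab (h : CorrTerm A t q₀ q₁ rsc as) : as.filterMap Arc.lab = [t] := by
  induction h with
  | arc _ hl => simp [hl]
  | eps _ hl _ ih => simpa [hl] using ih

theorem noTrailingEps (h : CorrTerm A t q₀ q₁ rsc as) : NoTrailingEps as := by
  induction h with
  | arc _ hl => exact NoTrailingEps.nil.cons fun _ => by simp [hl]
  | eps _ _ h ih => exact ih.cons fun has => by simpa [has] using h.filterMap_lab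

theorem derivesL_BHGrammar (h : CorrTerm A t q₀ q₁ rsc as) :
    DerivesL (BHGrammar G A) [.inr (.trip q₀ (.term t) q₁)] rsc [t] := by
  induction h with
  | arc ha hl => simpa [hl, BHSym.ofLab] using derivesL_arcRule (G := G) ha
  | eps he hl _ ih =>
    refine .of_rule (epsTermRule_mem _ _ _ _) ?_
    simpa [epsTermRule, hl, BHSym.ofLab] using (derivesL_arcRule (G := G) he).append ih

theorem weight_eq (h : CorrTerm A t q₀ q₁ rsc as) :
    (rsc.map Rule.wt).prod = (as.map Arc.wt).prod := by
  induction h with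
  | arc => simp [arcRule]
  | eps _ _ _ ih => simp [epsTermRule, arcRule, ih]

theorem filterMap_baseRule? (h : CorrTerm A t q₀ q₁ rsc as) :
    rsc.filterMap (baseRule? : _ → Option (Rule T N K)) = [] := by
  induction h with
  | arc => simp
  | eps _ _ _ ih => simpa using ih

theorem filterMap_baseArc? (h : CorrTerm A t q₀ q₁ rsc as) : rsc.filterMap baseArc? = as := by
  induction h with
  | arc => simp
  | eps _ _ _ ih => simpa using ih

end CorrTerm

variable (G A) in
/-- `Corr G A q₀ syms qs rsc ts as`: the leftmost derivation `rsc` of `G∩` from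
`(q₀, X₁, q₁) ⋯ (q_{M-1}, X_M, q_M)`, where `syms = X₁ ⋯ X_M` and `qs = q₁ ⋯ q_M`, is assembled
from the derivation `ts` of `G` from `syms` and the path `as` of `A` from `q₀` to `q_M`. -/
inductive Corr : Q → List (T ⊕ N) → List Q → List (Rule T (BHNT T N Q) K) → List (Rule T N K) →
    List (Arc T Q K) → Prop
  | nil (q : Q) : Corr q [] [] [] [] []
  | term {q₀ q₁ : Q} {t : T} {ss : List (T ⊕ N)} {qs : List Q}
      {rsc₁ rsc₂ : List (Rule T (BHNT T N Q) K)} {ts : List (Rule T N K)}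
      {as₁ as₂ : List (Arc T Q K)} (h₁ : CorrTerm A t q₀ q₁ rsc₁ as₁)
      (h₂ : Corr q₁ ss qs rsc₂ ts as₂) :
      Corr q₀ (.inl t :: ss) (q₁ :: qs) (rsc₁ ++ rsc₂) ts (as₁ ++ as₂)
  | null {r : Rule T N K} {q : Q} {ss : List (T ⊕ N)} {qs : List Q}
      {rsc : List (Rule T (BHNT T N Q) K)} {ts : List (Rule T N K)} {as : List (Arc T Q K)}
      (hr : r ∈ G.rules) (hnil : r.rhs = []) (h : Corr q ss qs rsc ts as) :
      Corr q (.inr r.lhs :: ss) (q :: qs) (nullRule r q :: rsc) (r :: ts) as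
  | lift {r : Rule T N K} {q₀ : Q} {ss : List (T ⊕ N)} {qs₁ qs : List Q}
      {rsc₁ rsc₂ : List (Rule T (BHNT T N Q) K)} {ts₁ ts₂ : List (Rule T N K)}
      {as₁ as₂ : List (Arc T Q K)} (hr : r ∈ G.rules) (hne : r.rhs ≠ [])
      (h₁ : Corr q₀ r.rhs qs₁ rsc₁ ts₁ as₁) (h₂ : Corr (qs₁.getLastD q₀) ss qs rsc₂ ts₂ as₂) :
      Corr q₀ (.inr r.lhs :: ss) (qs₁.getLastD q₀ :: qs) (liftRule r q₀ qs₁ :: (rsc₁ ++ rsc₂))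
        (r :: (ts₁ ++ ts₂)) (as₁ ++ as₂)

namespace Corr

variable {q₀ : Q} {syms : List (T ⊕ N)} {qs : List Q} {rsc : List (Rule T (BHNT T N Q) K)}
  {ts : List (Rule T N K)} {as : List (Arc T Q K)}

theorem length_eq (h : Corr G A q₀ syms qs rsc ts as) : qs.length = syms.length := by
  induction h <;> simp [*]

theorem chainFrom (h : Corr G A q₀ syms qs rsc ts as) : ChainFrom A q₀ as (qs.getLastD q₀) := by
  induction h with
  | nil => exact .nil _
  | term h₁ _ ih => rw [List.getLastD_cons]; exact h₁.chainFrom.append ih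
  | null _ _ _ ih => rwa [List.getLastD_cons]
  | lift _ _ _ _ ih₁ ih₂ => rw [List.getLastD_cons]; exact ih₁.append ih₂

theorem derivesL (h : Corr G A q₀ syms qs rsc ts as) :
    DerivesL G syms ts (as.filterMap Arc.lab) := by
  induction h with
  | nil => exact .refl []
  | term h₁ _ ih => simpa [h₁.filterMap_lab] using (DerivesL.refl (G := G) [_]).append ih
  | null hr hnil _ ih => exact .step ⟨hr, [], _, rfl, by simp [hnil]⟩ ih
  | lift hr _ _ _ ih₁ ih₂ => simpa using (DerivesL.of_rule hr ih₁).append ih₂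

theorem derivesL_BHGrammar (h : Corr G A q₀ syms qs rsc ts as) :
    DerivesL (BHGrammar G A) (tripRHS q₀ syms qs) rsc (as.filterMap Arc.lab) := by
  induction h with
  | nil => exact .refl []
  | term h₁ _ ih =>
    simpa [tripRHS, BHSym.ofSym, h₁.filterMap_lab] using h₁.derivesL_BHGrammar.append ih
  | null hr hnil _ ih =>
    simpa [tripRHS, BHSym.ofSym, nullRule] using
      (DerivesL.of_rule (nullRule_mem (A := A) hr hnil _) (.refl [])).append ih
  | lift hr hne h₁ _ ih₁ ih₂ =>
    simpa [tripRHS, BHSym.ofSym, liftRule] using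
      (DerivesL.of_rule (liftRule_mem hr hne _ h₁.length_eq) ih₁).append ih₂

theorem weight_eq (h : Corr G A q₀ syms qs rsc ts as) :
    (rsc.map Rule.wt).prod = (ts.map Rule.wt).prod * (as.map Arc.wt).prod := by
  induction h with
  | nil => simp
  | term h₁ _ ih => simp [h₁.weight_eq, ih]; ring
  | null _ _ _ ih => simp [nullRule, ih, mul_assoc]
  | lift _ _ _ _ ih₁ ih₂ => simp [liftRule, ih₁, ih₂]; ring

theorem noTrailingEps (h : Corr G A q₀ syms qs rsc ts as) : NoTrailingEps as := by
  induction h with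
  | nil => exact .nil
  | term h₁ _ ih => exact h₁.noTrailingEps.append ih
  | null _ _ _ ih => exact ih
  | lift _ _ _ _ ih₁ ih₂ => exact ih₁.append ih₂

theorem filterMap_baseRule? (h : Corr G A q₀ syms qs rsc ts as) :
    rsc.filterMap baseRule? = ts := by
  induction h with
  | nil => rfl
  | term h₁ _ ih => simp [h₁.filterMap_baseRule?, ih]
  | null _ hnil _ ih => simp [hnil, ih]
  | lift _ _ h₁ _ ih₁ ih₂ => simp [h₁.length_eq, ih₁, ih₂]

theorem filterMap_baseArc? (h : Corr G A q₀ syms qs rsc ts as) : rsc.filterMap baseArc? = as := by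
  induction h with
  | nil => rfl
  | term h₁ _ ih => simp [h₁.filterMap_baseArc?, ih]
  | null _ _ _ ih => simpa using ih
  | lift _ _ _ _ ih₁ ih₂ => simp [ih₁, ih₂]

end Corr

variable (G A) in
inductive CorrBar (qI : Q) : Q → List (Rule T (BHNT T N Q) K) → List (Rule T N K) →
    List (Arc T Q K) → Prop
  | start {p : Q} {rsc : List (Rule T (BHNT T N Q) K)} {ts : List (Rule T N K)}
      {as : List (Arc T Q K)} (h : Corr G A qI [.inr G.start] [p] rsc ts as) :
      CorrBar qI p (barStartRule G qI p :: rsc) ts as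
  | eps {e : Arc T Q K} {rsc : List (Rule T (BHNT T N Q) K)} {ts : List (Rule T N K)}
      {as : List (Arc T Q K)} (he : e ∈ A.arcs) (hl : e.lab = none)
      (h : CorrBar qI e.src rsc ts as) :
      CorrBar qI e.dst (barEpsRule qI e.src e.dst :: (rsc ++ [arcRule e])) ts (as ++ [e])

namespace CorrBar

variable {qI p : Q} {rsc : List (Rule T (BHNT T N Q) K)} {ts : List (Rule T N K)}
  {as : List (Arc T Q K)}

theorem chainFrom (h : CorrBar G A qI p rsc ts as) : ChainFrom A qI as p := by
  induction h with
  | start h => exact h.chainFrom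
  | eps he _ _ ih => exact ih.append (.singleton he)

theorem derivesL (h : CorrBar G A qI p rsc ts as) :
    DerivesL G [.inr G.start] ts (as.filterMap Arc.lab) := by
  induction h with
  | start h => exact h.derivesL
  | eps _ hl _ ih => simpa [hl] using ih

theorem derivesL_BHGrammar (hqI : A.init qI ≠ 0) (h : CorrBar G A qI p rsc ts as) :
    DerivesL (BHGrammar G A) [.inr (.trip qI .bar p)] rsc (as.filterMap Arc.lab) := by
  induction h with
  | start h => exact .of_rule (barStartRule_mem hqI _) h.derivesL_BHGrammar
  | eps he hl _ ih =>
    refine .of_rule (barEpsRule_mem hqI _ _) ?_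
    simpa [barEpsRule, hl, BHSym.ofLab] using ih.append (derivesL_arcRule (G := G) he)

theorem weight_eq (h : CorrBar G A qI p rsc ts as) :
    (rsc.map Rule.wt).prod = (ts.map Rule.wt).prod * (as.map Arc.wt).prod := by
  induction h with
  | start h => simpa [barStartRule] using h.weight_eq
  | eps _ _ _ ih => simp [barEpsRule, arcRule, ih, mul_assoc]

theorem filterMap_baseRule? (h : CorrBar G A qI p rsc ts as) : rsc.filterMap baseRule? = ts := by
  induction h with
  | start h => simpa using h.filterMap_baseRule?
  | eps _ _ _ ih => simpa using ih

theorem filterMap_baseArc? (h : CorrBar G A qI p rsc ts as) : rsc.filterMap baseArc? = as := by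
  induction h with
  | start h => simpa using h.filterMap_baseArc?
  | eps _ _ _ ih => simpa using ih

end CorrBar

theorem derivesL_eps_inv {p p' : Q} {rsc : List (Rule T (BHNT T N Q) K)} {x : List T}
    (h : DerivesL (BHGrammar G A) [.inr (.trip p .eps p')] rsc x) :
    ∃ e ∈ A.arcs, e.lab = none ∧ e.src = p ∧ e.dst = p' ∧ rsc = [arcRule e] ∧ x = [] := by
  obtain ⟨r, rsc', rfl, hr, hlhs, h'⟩ := h.singleton_inv
  obtain ⟨e, he, hl, rfl, rfl, rfl⟩ := rule_of_lhs_eps hr hlhs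
  obtain ⟨rfl, rfl⟩ := DerivesL.terminal_inv (z := []) (by simpa [arcRule, hl] using h')
  exact ⟨e, he, hl, rfl, rfl, rfl, rfl⟩

theorem CorrTerm.exists_of_derivesL {p p' : Q} {t : T} {rsc : List (Rule T (BHNT T N Q) K)}
    {x : List T} (h : DerivesL (BHGrammar G A) [.inr (.trip p (.term t) p')] rsc x) :
    ∃ as, CorrTerm A t p p' rsc as := by
  obtain ⟨r, rsc', rfl, hr, hlhs, h'⟩ := h.singleton_inv
  rcases rule_of_lhs_term hr hlhs with ⟨a, ha, hl, rfl, rfl, rfl⟩ | ⟨q, rfl⟩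
  · obtain ⟨rfl, -⟩ := DerivesL.terminal_inv (z := [t]) (by simpa [arcRule, hl] using h')
    exact ⟨[a], .arc ha hl⟩
  · obtain ⟨rsc₁, rsc₂, x₁, x₂, rfl, rfl, h₁, h₂⟩ :=
      DerivesL.append_inv (α := [_]) (β := [_]) h'
    obtain ⟨e, he, hl, rfl, rfl, rfl, rfl⟩ := derivesL_eps_inv h₁
    obtain ⟨as, hc⟩ := exists_of_derivesL h₂
    exact ⟨e :: as, .eps he hl hc⟩
termination_by rsc.length
decreasing_by subst_vars; simp

theorem Corr.exists_of_derivesL {q₀ : Q} {syms : List (T ⊕ N)} {qs : List Q}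
    {rsc : List (Rule T (BHNT T N Q) K)} {x : List T} (hqs : qs.length = syms.length)
    (h : DerivesL (BHGrammar G A) (tripRHS q₀ syms qs) rsc x) :
    ∃ ts as, Corr G A q₀ syms qs rsc ts as := by
  cases syms with
  | nil =>
    obtain rfl : qs = [] := List.length_eq_zero_iff.1 hqs
    obtain ⟨rfl, -⟩ := DerivesL.nil_inv h
    exact ⟨[], [], .nil q₀⟩
  | cons s ss =>
    obtain ⟨q₁, qs, rfl⟩ := List.exists_cons_of_length_eq_add_one hqs
    obtain ⟨rsc₁, rsc₂, x₁, x₂, rfl, rfl, h₁, h₂⟩ := DerivesL.append_inv (α := [_]) h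
    obtain ⟨r, rsc₁, rfl, hr, hlhs, h₁'⟩ := h₁.singleton_inv
    obtain ⟨ts₂, as₂, hc₂⟩ := exists_of_derivesL (by simpa using hqs) h₂
    cases s with
    | inl t =>
      obtain ⟨as₁, hc₁⟩ := CorrTerm.exists_of_derivesL h₁
      exact ⟨ts₂, as₁ ++ as₂, .term hc₁ hc₂⟩
    | inr X =>
      rcases rule_of_lhs_nt hr hlhs with ⟨r₀, hr₀, hnil, rfl, rfl, rfl⟩ |
        ⟨r₀, hr₀, qs₁, hne, hqs₁, rfl, rfl, rfl⟩
      · obtain ⟨rfl, -⟩ := DerivesL.nil_inv (by simpa [nullRule] using h₁')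
        exact ⟨r₀ :: ts₂, as₂, .null hr₀ hnil hc₂⟩
      · obtain ⟨ts₁, as₁, hc₁⟩ := exists_of_derivesL hqs₁ h₁'
        exact ⟨_, _, .lift hr₀ hne hc₁ hc₂⟩
termination_by rsc.length
decreasing_by all_goals (subst_vars; simp)

theorem CorrBar.exists_of_derivesL {qI p : Q} {rsc : List (Rule T (BHNT T N Q) K)} {x : List T}
    (h : DerivesL (BHGrammar G A) [.inr (.trip qI .bar p)] rsc x) :
    ∃ ts as, CorrBar G A qI p rsc ts as := by
  obtain ⟨r, rsc', rfl, hr, hlhs, h'⟩ := h.singleton_inv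
  rcases rule_of_lhs_bar hr hlhs with ⟨q, rfl⟩ | rfl
  · obtain ⟨rsc₁, rsc₂, x₁, x₂, rfl, rfl, h₁, h₂⟩ := DerivesL.append_inv (α := [_]) (β := [_]) h'
    obtain ⟨e, he, hl, rfl, rfl, rfl, rfl⟩ := derivesL_eps_inv h₂
    obtain ⟨ts, as, hc⟩ := exists_of_derivesL h₁
    exact ⟨ts, as ++ [e], .eps he hl hc⟩
  · obtain ⟨ts, as, hc⟩ := Corr.exists_of_derivesL (syms := [.inr G.start]) (qs := [p]) rfl h'
    exact ⟨ts, as, .start hc⟩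
termination_by rsc.length
decreasing_by subst_vars; simp

theorem CorrTerm.exists_of_chainFrom {q₁ : Q} {t : T} :
    ∀ {q₀ : Q} {as : List (Arc T Q K)}, ChainFrom A q₀ as q₁ → as.filterMap Arc.lab = [t] →
      NoTrailingEps as → ∃ rsc : List (Rule T (BHNT T N Q) K), CorrTerm A t q₀ q₁ rsc as
  | _, [], _, hx, _ => by simp at hx
  | _, a :: as, hc, hx, hn => by
    obtain ⟨ha, rfl, hc'⟩ := hc.cons_inv
    cases hl : a.lab with
    | none =>
      rw [List.filterMap_cons_none hl] at hx
      obtain ⟨rsc, h⟩ := exists_of_chainFrom hc' hx (hn.of_append_right (as := [a]))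
      exact ⟨_, .eps ha hl h⟩
    | some c =>
      rw [List.filterMap_cons_some hl, List.cons.injEq] at hx
      obtain ⟨rfl, hx⟩ := hx
      obtain rfl := (hn.of_append_right (as := [a])).eq_nil_of_filterMap_eq_nil hx
      obtain rfl := hc'.nil_inv
      exact ⟨_, .arc ha hl⟩

theorem Corr.exists_of_derivesL_of_chainFrom {q₀ q₁ : Q} {syms : List (T ⊕ N)}
    {ts : List (Rule T N K)} {as : List (Arc T Q K)}
    (hd : DerivesL G syms ts (as.filterMap Arc.lab)) (hc : ChainFrom A q₀ as q₁)
    (hn : NoTrailingEps as) : ∃ qs rsc, qs.getLastD q₀ = q₁ ∧ Corr G A q₀ syms qs rsc ts as := by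
  cases syms with
  | nil =>
    obtain ⟨rfl, hx⟩ := hd.nil_inv
    obtain rfl := hn.eq_nil_of_filterMap_eq_nil hx
    obtain rfl := hc.nil_inv
    exact ⟨[], [], rfl, .nil _⟩
  | cons s ss =>
    obtain ⟨ts₁, ts₂, x₁, x₂, rfl, hx, h₁, h₂⟩ := DerivesL.append_inv (α := [s]) hd
    obtain ⟨as₁, as₂, rfl, rfl, rfl, hn₁⟩ := NoTrailingEps.exists_split_of_filterMap_eq_append hx
    obtain ⟨m, hc₁, hc₂⟩ := hc.append_inv
    obtain ⟨qs, rsc₂, hq, hc₂'⟩ := exists_of_derivesL_of_chainFrom h₂ hc₂ hn.of_append_right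
    cases s with
    | inl t =>
      obtain ⟨rfl, hx₁⟩ := DerivesL.terminal_inv (z := [t]) h₁
      obtain ⟨rsc₁, hc₁'⟩ := CorrTerm.exists_of_chainFrom hc₁ hx₁ hn₁
      exact ⟨m :: qs, _, by rwa [List.getLastD_cons], .term hc₁' hc₂'⟩
    | inr X =>
      obtain ⟨r, ts₁, rfl, hr, rfl, h₁'⟩ := h₁.singleton_inv
      by_cases hnil : r.rhs = []
      · obtain ⟨rfl, hx₁⟩ := DerivesL.nil_inv (hnil ▸ h₁')
        obtain rfl := hn₁.eq_nil_of_filterMap_eq_nil hx₁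
        obtain rfl := hc₁.nil_inv
        exact ⟨_ :: qs, _, by rwa [List.getLastD_cons], .null hr hnil hc₂'⟩
      · obtain ⟨qs₁, rsc₁, rfl, hc₁'⟩ := exists_of_derivesL_of_chainFrom h₁' hc₁ hn₁
        exact ⟨_, _, by rwa [List.getLastD_cons], .lift hr hnil hc₁' hc₂'⟩
termination_by (ts.length, syms.length)
decreasing_by all_goals (subst_vars; simp_wf; rw [Prod.lex_def]; omega)

theorem CorrBar.exists_of_derivesL_of_chainFrom {qI p : Q} {ts : List (Rule T N K)}
    {as : List (Arc T Q K)} (hd : DerivesL G [.inr G.start] ts (as.filterMap Arc.lab))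
    (hc : ChainFrom A qI as p) : ∃ rsc, CorrBar G A qI p rsc ts as := by
  by_cases hn : NoTrailingEps as
  · obtain ⟨qs, rsc, hq, h⟩ := Corr.exists_of_derivesL_of_chainFrom hd hc hn
    obtain ⟨p', rfl⟩ := List.length_eq_one_iff.1 h.length_eq
    obtain rfl : p' = p := hq
    exact ⟨_, .start h⟩
  · obtain ⟨as, e, rfl, hl⟩ := NoTrailingEps.not_iff.1 hn
    obtain ⟨m, hc₁, hc₂⟩ := hc.append_inv
    obtain ⟨he, rfl, hc₃⟩ := hc₂.cons_inv
    obtain rfl := hc₃.nil_inv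
    obtain ⟨rsc, h⟩ := exists_of_derivesL_of_chainFrom (by simpa [hl] using hd) hc₁
    exact ⟨_, .eps he hl h⟩
termination_by as.length
decreasing_by subst_vars; simp

namespace CorrTerm

variable {t : T} {q₀ q₁ : Q} {rsc rsc' : List (Rule T (BHNT T N Q) K)} {as : List (Arc T Q K)}

theorem inv (h : CorrTerm A t q₀ q₁ rsc as) :
    (∃ a, a.lab = some t ∧ rsc = [arcRule a] ∧ as = [a]) ∨
      ∃ e rsc' as', e.lab = none ∧ rsc = epsTermRule e.src t e.dst q₁ :: arcRule e :: rsc' ∧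
        as = e :: as' ∧ CorrTerm A t e.dst q₁ rsc' as' := by
  cases h with
  | arc _ hl => exact Or.inl ⟨_, hl, rfl, rfl⟩
  | eps _ hl h => exact Or.inr ⟨_, _, _, hl, rfl, rfl, h⟩

theorem unique (h : CorrTerm A t q₀ q₁ rsc as) (h' : CorrTerm A t q₀ q₁ rsc' as) : rsc = rsc' := by
  induction h generalizing rsc' with
  | arc _ hl =>
    rcases h'.inv with ⟨a', -, rfl, has⟩ | ⟨e, _, _, hl', -, has, -⟩
    · rw [List.singleton_inj.1 has]
    · obtain ⟨rfl, -⟩ := List.cons.inj has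
      simp_all
  | eps _ hl _ ih =>
    rcases h'.inv with ⟨a', hl', -, has⟩ | ⟨e', rsc₁', as₁', -, rfl, has, h₁'⟩
    · obtain ⟨rfl, -⟩ := List.cons.inj has
      simp_all
    · obtain ⟨rfl, rfl⟩ := List.cons.inj has
      rw [ih h₁']

end CorrTerm

namespace Corr

variable {q₀ : Q} {ss : List (T ⊕ N)} {syms : List (T ⊕ N)} {qs qs' : List Q}
  {rsc rsc' : List (Rule T (BHNT T N Q) K)} {ts : List (Rule T N K)} {as : List (Arc T Q K)}

theorem nil_inv (h : Corr G A q₀ [] qs rsc ts as) : qs = [] ∧ rsc = [] := by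
  cases h; exact ⟨rfl, rfl⟩

theorem term_inv {t : T} (h : Corr G A q₀ (.inl t :: ss) qs rsc ts as) :
    ∃ q₁ qs' rsc₁ rsc₂ as₁ as₂, qs = q₁ :: qs' ∧ rsc = rsc₁ ++ rsc₂ ∧ as = as₁ ++ as₂ ∧
      CorrTerm A t q₀ q₁ rsc₁ as₁ ∧ Corr G A q₁ ss qs' rsc₂ ts as₂ := by
  cases h with
  | term h₁ h₂ => exact ⟨_, _, _, _, _, _, rfl, rfl, rfl, h₁, h₂⟩

theorem nt_inv {X : N} (h : Corr G A q₀ (.inr X :: ss) qs rsc ts as) :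
    (∃ r qs' rsc' ts', r.rhs = [] ∧ qs = q₀ :: qs' ∧ rsc = nullRule r q₀ :: rsc' ∧
      ts = r :: ts' ∧ Corr G A q₀ ss qs' rsc' ts' as) ∨
    ∃ r qs₁ qs' rsc₁ rsc₂ ts₁ ts₂ as₁ as₂, r.rhs ≠ [] ∧ qs = qs₁.getLastD q₀ :: qs' ∧
      rsc = liftRule r q₀ qs₁ :: (rsc₁ ++ rsc₂) ∧ ts = r :: (ts₁ ++ ts₂) ∧ as = as₁ ++ as₂ ∧
      Corr G A q₀ r.rhs qs₁ rsc₁ ts₁ as₁ ∧ Corr G A (qs₁.getLastD q₀) ss qs' rsc₂ ts₂ as₂ := by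
  cases h with
  | null _ hnil h => exact Or.inl ⟨_, _, _, _, hnil, rfl, rfl, rfl, h⟩
  | lift _ hne h₁ h₂ => exact Or.inr ⟨_, _, _, _, _, _, _, _, _, hne, rfl, rfl, rfl, rfl, h₁, h₂⟩

theorem unique (h : Corr G A q₀ syms qs rsc ts as) (h' : Corr G A q₀ syms qs' rsc' ts as) :
    qs = qs' ∧ rsc = rsc' := by
  induction h generalizing qs' rsc' with
  | nil =>
    obtain ⟨rfl, rfl⟩ := h'.nil_inv
    exact ⟨rfl, rfl⟩
  | term h₁ _ ih =>
    obtain ⟨q₁', qs'', rsc₁', rsc₂', as₁', as₂', rfl, rfl, has, h₁', h₂'⟩ := h'.term_inv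
    obtain rfl := NoTrailingEps.left_unique_of_append_eq has h₁.noTrailingEps
      h₁'.noTrailingEps (by rw [h₁.filterMap_lab, h₁'.filterMap_lab])
    obtain rfl := h₁.chainFrom.target_unique h₁'.chainFrom
    obtain rfl := List.append_cancel_left has
    obtain ⟨rfl, rfl⟩ := ih h₂'
    rw [h₁.unique h₁']
    exact ⟨rfl, rfl⟩
  | null _ hnil _ ih =>
    rcases h'.nt_inv with ⟨r', qs'', rsc'', ts', -, rfl, rfl, hts, h₂'⟩ |
      ⟨r', _, _, _, _, _, _, _, _, hne, -, -, hts, -⟩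
    · obtain ⟨rfl, rfl⟩ := List.cons.inj hts
      obtain ⟨rfl, rfl⟩ := ih h₂'
      exact ⟨rfl, rfl⟩
    · obtain ⟨rfl, -⟩ := List.cons.inj hts
      exact absurd hnil hne
  | lift _ hne h₁ _ ih₁ ih₂ =>
    rcases h'.nt_inv with ⟨r', _, _, _, hnil, -, -, hts, -⟩ |
      ⟨r', qs₁', qs'', rsc₁', rsc₂', ts₁', ts₂', as₁', as₂', -, rfl, rfl, hts, has, h₁', h₂'⟩
    · obtain ⟨rfl, -⟩ := List.cons.inj hts
      exact absurd hnil hne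
    · obtain ⟨rfl, hts'⟩ := List.cons.inj hts
      obtain ⟨rfl, hx⟩ := DerivesL.left_unique_of_append_eq h₁.derivesL h₁'.derivesL hts'
      obtain rfl :=
        NoTrailingEps.left_unique_of_append_eq has h₁.noTrailingEps h₁'.noTrailingEps hx
      obtain rfl := List.append_cancel_left hts'
      obtain rfl := List.append_cancel_left has
      obtain ⟨rfl, rfl⟩ := ih₁ h₁'
      obtain ⟨rfl, rfl⟩ := ih₂ h₂'
      exact ⟨rfl, rfl⟩

end Corr

theorem CorrBar.inv {qI p : Q} {rsc : List (Rule T (BHNT T N Q) K)} {ts : List (Rule T N K)}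
    {as : List (Arc T Q K)} (h : CorrBar G A qI p rsc ts as) :
    (∃ rsc', rsc = barStartRule G qI p :: rsc' ∧ Corr G A qI [.inr G.start] [p] rsc' ts as) ∨
      ∃ e rsc' as', e.lab = none ∧ rsc = barEpsRule qI e.src e.dst :: (rsc' ++ [arcRule e]) ∧
        as = as' ++ [e] ∧ CorrBar G A qI e.src rsc' ts as' := by
  cases h with
  | start h => exact Or.inl ⟨_, rfl, h⟩
  | eps _ hl h => exact Or.inr ⟨_, _, _, hl, rfl, rfl, h⟩

theorem CorrBar.unique {qI p : Q} {rsc rsc' : List (Rule T (BHNT T N Q) K)}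
    {ts : List (Rule T N K)} {as : List (Arc T Q K)} (h : CorrBar G A qI p rsc ts as)
    (h' : CorrBar G A qI p rsc' ts as) : rsc = rsc' := by
  induction h generalizing rsc' with
  | start h =>
    rcases h'.inv with ⟨rsc₀, rfl, h₀⟩ | ⟨e, _, as', hl, -, rfl, -⟩
    · rw [(h.unique h₀).2]
    · exact absurd h.noTrailingEps (NoTrailingEps.not_iff.2 ⟨as', e, rfl, hl⟩)
  | eps _ hl _ ih =>
    rcases h'.inv with ⟨_, -, h₀⟩ | ⟨e', rsc₀, as', -, rfl, has, h₀⟩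
    · exact absurd h₀.noTrailingEps (NoTrailingEps.not_iff.2 ⟨_, _, rfl, hl⟩)
    · obtain ⟨rfl, rfl⟩ := List.append_singleton_inj.1 has
      rw [ih h₀]

variable {qI q : Q}

theorem CorrBar.of_deriv (d : Deriv (BHGrammar G A) (.trip qI .bar q)) :
    CorrBar G A qI q d.rules (d.rules.filterMap baseRule?) (d.rules.filterMap baseArc?) := by
  obtain ⟨ts, as, h⟩ := CorrBar.exists_of_derivesL d.ok
  rwa [h.filterMap_baseRule?, h.filterMap_baseArc?]

theorem yield_eq_of_deriv (hqI : A.init qI ≠ 0) (d : Deriv (BHGrammar G A) (.trip qI .bar q)) :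
    d.yield = (d.rules.filterMap baseArc?).filterMap Arc.lab :=
  d.ok.yield_unique ((CorrBar.of_deriv d).derivesL_BHGrammar hqI)

/-- The bijection `ξ`. -/
def toJoin (hqI : A.init qI ≠ 0) (d : Deriv (BHGrammar G A) (.trip qI .bar q)) :
    {p : SubDeriv G (.nt G.start) × SubPath A qI q // p.1.yield = p.2.yield} :=
  ⟨(⟨d.rules.filterMap baseRule?, d.yield,
      yield_eq_of_deriv hqI d ▸ (CorrBar.of_deriv d).derivesL⟩,
    ⟨d.rules.filterMap baseArc?, (CorrBar.of_deriv d).chainFrom⟩), yield_eq_of_deriv hqI d⟩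

theorem toJoin_injective (hqI : A.init qI ≠ 0) :
    Function.Injective (toJoin (G := G) (A := A) (q := q) hqI) := by
  intro d d' h
  have hts : d.rules.filterMap baseRule? = d'.rules.filterMap baseRule? :=
    congrArg (fun p => p.1.1.rules) h
  have has : d.rules.filterMap baseArc? = d'.rules.filterMap baseArc? :=
    congrArg (fun p => p.1.2.arcs) h
  have hd' := CorrBar.of_deriv d'
  rw [← hts, ← has] at hd'
  exact DerivFrom.ext_of_rules ((CorrBar.of_deriv d).unique hd')

theorem toJoin_surjective (hqI : A.init qI ≠ 0) :
    Function.Surjective (toJoin (G := G) (A := A) (q := q) hqI) := by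
  rintro ⟨⟨t, π⟩, hy⟩
  obtain ⟨rsc, h⟩ := CorrBar.exists_of_derivesL_of_chainFrom (hy ▸ t.ok) π.ok
  refine ⟨⟨rsc, t.yield, hy ▸ h.derivesL_BHGrammar hqI⟩, Subtype.ext (Prod.ext ?_ ?_)⟩
  · exact DerivFrom.ext_of_rules h.filterMap_baseRule?
  · exact SubPath.ext_of_arcs h.filterMap_baseArc?

theorem weight_toJoin (hqI : A.init qI ≠ 0) (d : Deriv (BHGrammar G A) (.trip qI .bar q)) :
    d.weight = (toJoin hqI d).1.1.weight * (toJoin hqI d).1.2.weight :=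
  (CorrBar.of_deriv d).weight_eq

end BarHillel

theorem bar_hillel_bar_bijection_general
    {T N Q K : Type*} [CommSemiring K]
    (G : WCFG T N K) (A : WFSA T Q K)
    (qI q : Q) (hqI : A.init qI ≠ 0) :
    ∃ ξ : Deriv (BHGrammar G A) (BHNT.trip qI BHSym.bar q) →
        {p : SubDeriv G (BHSym.nt G.start) × SubPath A qI q //
          p.1.yield = p.2.yield},
      Function.Bijective ξ ∧
      ∀ d, (ξ d).1.1.yield = d.yield ∧ (ξ d).1.2.yield = d.yield ∧
        d.weight = (ξ d).1.1.weight * (ξ d).1.2.weight :=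
  ⟨BarHillel.toJoin hqI, ⟨BarHillel.toJoin_injective hqI, BarHillel.toJoin_surjective hqI⟩,
    fun d => ⟨rfl, (BarHillel.toJoin hqI d).2.symm, BarHillel.weight_toJoin hqI d⟩⟩

/-- **Lemma B.2.**  For any triplet nonterminal `(qI, S̄, q)` of the
generalized Bar-Hillel grammar `G∩` with `qI ∈ I` and `q ∈ Q`, there is a
bijection `ξ` from the subderivations of `G∩` rooted at `(qI, S̄, q)` to the
weighted join of the subderivations of `G` rooted at `S` with the subpaths of
`A` from `qI` to `q`; `ξ` preserves yields, and the weight of a subderivation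
of `G∩` is the `⊗`-product of the weights of the corresponding subderivation
and subpath. -/
theorem bar_hillel_bar_bijection
    {T N Q K : Type*} [CommSemiring K] [Finite N] [Finite Q]
    (G : WCFG T N K) (A : WFSA T Q K) (hGfin : G.rules.Finite)
    (qI q : Q) (hqI : A.init qI ≠ 0) :
    ∃ ξ : Deriv (BHGrammar G A) (BHNT.trip qI BHSym.bar q) →
        {p : SubDeriv G (BHSym.nt G.start) × SubPath A qI q //
          p.1.yield = p.2.yield},
      Function.Bijective ξ ∧
      ∀ d, (ξ d).1.1.yield = d.yield ∧ (ξ d).1.2.yield = d.yield ∧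
        d.weight = (ξ d).1.1.weight * (ξ d).1.2.weight :=
  bar_hillel_bar_bijection_general G A qI q hqI
end

section
/- (Completeness part of the strong-equivalence theorem.) Let G be a WCFG and A a WFSA over the same alphabet Σ and the same commutative semiring W, and let G∩ be the generalized Bar-Hillel grammar. For every derivation t of G and every path π of A with yield(t) = yield(π), there exists a derivation t∩ of G∩ with yield(t∩) = yield(t) and w(t∩) = w(t) ⊗ w(π). -/
/-!
Split the path into a part ending in a labeled arc, followed by ε-arcs only. By induction on
leftmost derivations, a derivation of a sentential form `α` with yield `x`, together with a
subpath `p → q` with yield `x` that ends in a labeled arc, lifts to a derivation in `G∩` of the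
triple form `tripRHS p α qs` of `α` along states of the subpath, weighted by the product of
both weights: each rule of `G` becomes a rule of schema (d) or (e), and ε-arcs are absorbed
by rule (g) into the triple of the next terminal. The trailing ε-arcs, which have no terminal
after them, are absorbed by rule (b) at the top, and rules (c) and (a) close the derivation.
-/

theorem List.getLastD_append {α : Type*} (l₁ l₂ : List α) (a : α) :
    (l₁ ++ l₂).getLastD a = l₂.getLastD (l₁.getLastD a) := by
  induction l₁ generalizing a with
  | nil => rfl
  | cons b l₁ ih => simp only [List.cons_append, List.getLastD_cons, ih]

section Derivations

variable {T N K : Type*} {G : WCFG T N K} {r : Rule T N K} {α β : List (T ⊕ N)}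

namespace StepL

theorem append_right (h : StepL G r α β) (γ : List (T ⊕ N)) :
    StepL G r (α ++ γ) (β ++ γ) := by
  obtain ⟨hr, z, δ, rfl, rfl⟩ := h
  exact ⟨hr, z, δ ++ γ, by simp, by simp⟩

theorem map_inl_append (h : StepL G r α β) (y : List T) :
    StepL G r (y.map Sum.inl ++ α) (y.map Sum.inl ++ β) := by
  obtain ⟨hr, z, δ, rfl, rfl⟩ := h
  exact ⟨hr, y ++ z, δ, by simp, by simp⟩

theorem append_cases {γ : List (T ⊕ N)} (h : StepL G r (α ++ β) γ) :
    (∃ α', StepL G r α α' ∧ γ = α' ++ β) ∨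
      ∃ (y : List T) (β' : List (T ⊕ N)), α = y.map Sum.inl ∧ StepL G r β β' ∧ γ = α ++ β' := by
  obtain ⟨hr, z, δ, hαβ, rfl⟩ := h
  rcases List.append_eq_append_iff.mp hαβ with ⟨c, hz, rfl⟩ | ⟨c, rfl, hc⟩
  · obtain ⟨y, y', rfl, rfl, rfl⟩ := List.map_eq_append_iff.mp hz
    exact Or.inr ⟨y, _, rfl, ⟨hr, y', δ, rfl, rfl⟩, by simp⟩
  · cases c with
    | nil =>
      obtain rfl : β = Sum.inr r.lhs :: δ := by simpa using hc.symm
      exact Or.inr ⟨z, _, by simp, ⟨hr, [], δ, rfl, rfl⟩, by simp⟩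
    | cons e c =>
      obtain ⟨rfl, rfl⟩ := List.cons_eq_cons.mp hc
      exact Or.inl ⟨_, ⟨hr, z, c, rfl, rfl⟩, by simp⟩

end StepL

namespace DerivesL

variable {rs ss : List (Rule T N K)} {x y : List T}

theorem single (hr : r ∈ G.rules) (h : DerivesL G r.rhs rs x) :
    DerivesL G [Sum.inr r.lhs] (r :: rs) x :=
  step ⟨hr, [], [], by simp, by simp⟩ h

theorem map_inl_append (h : DerivesL G α rs x) (y : List T) :
    DerivesL G (y.map Sum.inl ++ α) rs (y ++ x) := by
  induction h with
  | refl x => simpa using refl (G := G) (y ++ x)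
  | step hs _ ih => exact step (hs.map_inl_append y) ih

theorem append_s7 (h₁ : DerivesL G α rs x) (h₂ : DerivesL G β ss y) :
    DerivesL G (α ++ β) (rs ++ ss) (x ++ y) := by
  induction h₁ with
  | refl x => simpa using h₂.map_inl_append x
  | step hs _ ih => exact step (hs.append_right β) ih

theorem rules_eq_nil_of_map_inl (h : DerivesL G (y.map Sum.inl) rs x) : rs = [] := by
  generalize hα : y.map Sum.inl = α at h
  cases h with
  | refl => rfl
  | @step _ _ r' _ _ hs _ =>
    obtain ⟨_, z, δ, rfl, _⟩ := hs
    have hmem : Sum.inr r'.lhs ∈ y.map Sum.inl := by simp [hα]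
    simp at hmem

theorem split_append (h : DerivesL G (α ++ β) rs x) :
    ∃ rs₁ rs₂ x₁ x₂, rs = rs₁ ++ rs₂ ∧ x = x₁ ++ x₂ ∧
      DerivesL G α rs₁ x₁ ∧ DerivesL G β rs₂ x₂ := by
  generalize hγ : α ++ β = γ at h
  induction h generalizing α β with
  | refl x =>
    obtain ⟨x₁, x₂, rfl, rfl, rfl⟩ := List.map_eq_append_iff.mp hγ.symm
    exact ⟨[], [], x₁, x₂, rfl, rfl, refl x₁, refl x₂⟩
  | step hs _ ih =>
    subst hγ
    rcases hs.append_cases with ⟨α', hs', rfl⟩ | ⟨y, β', rfl, hs', rfl⟩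
    · obtain ⟨rs₁, rs₂, x₁, x₂, rfl, rfl, h₁, h₂⟩ := ih rfl
      exact ⟨_ :: rs₁, rs₂, x₁, x₂, rfl, rfl, step hs' h₁, h₂⟩
    · obtain ⟨rs₁, rs₂, x₁, x₂, rfl, rfl, h₁, h₂⟩ := ih rfl
      obtain rfl := h₁.rules_eq_nil_of_map_inl
      exact ⟨[], _ :: rs₂, x₁, x₂, rfl, rfl, h₁, step hs' h₂⟩

end DerivesL

end Derivations

section Paths

variable {T Q K : Type*} {A : WFSA T Q K}

theorem ChainFrom.split_append {p q : Q} {l₁ l₂ : List (Arc T Q K)}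
    (h : ChainFrom A p (l₁ ++ l₂) q) : ∃ m, ChainFrom A p l₁ m ∧ ChainFrom A m l₂ q := by
  induction l₁ generalizing p with
  | nil => exact ⟨p, .nil p, h⟩
  | cons a l₁ ih =>
    cases h with
    | cons ha h =>
      obtain ⟨m, h₁, h₂⟩ := ih h
      exact ⟨m, .cons ha h₁, h₂⟩

def EndsLabeled (as : List (Arc T Q K)) : Prop :=
  ∀ h : as ≠ [], (as.getLast h).lab.isSome

namespace EndsLabeled

variable {a : Arc T Q K} {as : List (Arc T Q K)}

theorem of_cons (h : EndsLabeled (a :: as)) : EndsLabeled as :=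
  fun hne => List.getLast_cons hne ▸ h (List.cons_ne_nil a as)

theorem ne_nil_of_cons_of_lab_eq_none (h : EndsLabeled (a :: as)) (ha : a.lab = none) :
    as ≠ [] := by
  rintro rfl
  simpa [ha] using h (List.cons_ne_nil a [])

theorem filterMap_lab_ne_nil (h : EndsLabeled as) (hne : as ≠ []) :
    as.filterMap Arc.lab ≠ [] := by
  obtain ⟨c, hc⟩ := Option.isSome_iff_exists.mp (h hne)
  exact List.ne_nil_of_mem (List.mem_filterMap.mpr ⟨_, List.getLast_mem hne, hc⟩)

end EndsLabeled

theorem exists_endsLabeled_append_eps (as : List (Arc T Q K)) :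
    ∃ core tail, as = core ++ tail ∧ EndsLabeled core ∧ tail.filterMap Arc.lab = [] := by
  let isEps : Arc T Q K → Bool := fun a => a.lab.isNone
  refine ⟨as.rdropWhile isEps, as.rtakeWhile isEps,
    List.rdropWhile_append_rtakeWhile.symm, fun hne => ?_, ?_⟩
  · simpa [isEps, Option.isSome_iff_ne_none] using List.rdropWhile_last_not isEps as hne
  · refine List.filterMap_eq_nil_iff.mpr fun a ha => ?_
    simpa [isEps] using List.mem_rtakeWhile_imp ha

end Paths

theorem tripRHS_append {T N Q : Type*} {p : Q} {α β : List (T ⊕ N)} {qs₁ qs₂ : List Q}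
    (h : qs₁.length = α.length) :
    tripRHS p (α ++ β) (qs₁ ++ qs₂) = tripRHS p α qs₁ ++ tripRHS (qs₁.getLastD p) β qs₂ := by
  induction α generalizing p qs₁ with
  | nil => rw [List.length_eq_zero_iff.mp h]; rfl
  | cons s α ih =>
    obtain ⟨q, qs₁, rfl⟩ := List.exists_cons_of_length_eq_add_one h
    simp only [List.cons_append, tripRHS, List.getLastD_cons, ih (Nat.succ_inj.mp h)]

namespace BHGrammar

variable {T N Q K : Type*} [CommSemiring K] {G : WCFG T N K} {A : WFSA T Q K}

theorem start_subset : bhRulesStart G A ⊆ (BHGrammar G A).rules :=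
  fun _ h => by simp [BHGrammar, h]

theorem bar_subset : bhRulesBar G A ⊆ (BHGrammar G A).rules :=
  fun _ h => by simp [BHGrammar, h]

theorem exit_subset : bhRulesExit G A ⊆ (BHGrammar G A).rules :=
  fun _ h => by simp [BHGrammar, h]

theorem cfg_subset : bhRulesCFG G A ⊆ (BHGrammar G A).rules :=
  fun _ h => by simp [BHGrammar, h]

theorem nil_subset : bhRulesNil G A ⊆ (BHGrammar G A).rules :=
  fun _ h => by simp [BHGrammar, h]

theorem arc_subset : bhRulesArc G A ⊆ (BHGrammar G A).rules :=
  fun _ h => by simp [BHGrammar, h]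

theorem arcEps_subset : bhRulesArcEps G A ⊆ (BHGrammar G A).rules :=
  fun _ h => by simp [BHGrammar, h]

theorem tripRule_mem {r : Rule T N K} (hr : r ∈ G.rules) {p : Q} {qs : List Q}
    (h : qs.length = r.rhs.length) :
    (⟨.trip p (.nt r.lhs) (qs.getLastD p), tripRHS p r.rhs qs, r.wt⟩ : Rule T (BHNT T N Q) K)
      ∈ (BHGrammar G A).rules := by
  by_cases hrhs : r.rhs = []
  · obtain rfl : qs = [] := List.length_eq_zero_iff.mp (by rw [h, hrhs]; rfl)
    rw [hrhs]
    exact nil_subset ⟨r, p, hr, hrhs, rfl⟩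
  · exact cfg_subset ⟨r, p, qs, hr, hrhs, h, rfl⟩

theorem derivesL_arc {a : Arc T Q K} (ha : a ∈ A.arcs) {l : Option T} (hl : a.lab = l) :
    DerivesL (BHGrammar G A) [.inr (.trip a.src (.ofLab l) a.dst)]
      [⟨.trip a.src (.ofLab l) a.dst, l.toList.map Sum.inl, a.wt⟩] l.toList := by
  subst hl
  exact .single (arc_subset ⟨a, ha, rfl⟩) (.refl _)

theorem derivesL_term_of_eps_arc {a : Arc T Q K} (ha : a ∈ A.arcs) (hl : a.lab = none)
    {c : T} {q : Q} {rs : List (Rule T (BHNT T N Q) K)} {x : List T}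
    (h : DerivesL (BHGrammar G A) [.inr (.trip a.dst (.term c) q)] rs x) :
    ∃ rs', DerivesL (BHGrammar G A) [.inr (.trip a.src (.term c) q)] rs' x ∧
      (rs'.map Rule.wt).prod = a.wt * (rs.map Rule.wt).prod := by
  have hrhs := (derivesL_arc (G := G) ha hl).append_s7 h
  refine ⟨_, .single (arcEps_subset ⟨c, a.src, a.dst, q, rfl⟩) hrhs, ?_⟩
  simp

theorem derivesL_tripRHS_of_chain {p q : Q} {as : List (Arc T Q K)}
    (hc : ChainFrom A p as q) (hn : EndsLabeled as) :
    ∃ (qs : List Q) (rs : List (Rule T (BHNT T N Q) K)),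
      qs.length = (as.filterMap Arc.lab).length ∧ qs.getLastD p = q ∧
      DerivesL (BHGrammar G A) (tripRHS p ((as.filterMap Arc.lab).map Sum.inl) qs) rs
        (as.filterMap Arc.lab) ∧
      (rs.map Rule.wt).prod = (as.map Arc.wt).prod := by
  induction hc with
  | nil q => exact ⟨[], [], rfl, rfl, .refl [], rfl⟩
  | @cons a as q ha hc ih =>
    obtain ⟨qs, rs, hlen, hlast, hd, hw⟩ := ih hn.of_cons
    cases hl : a.lab with
    | some c =>
      refine ⟨a.dst :: qs, ⟨.trip a.src (.term c) a.dst, [.inl c], a.wt⟩ :: rs,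
        by simp [hl, hlen], by rwa [List.getLastD_cons], ?_, ?_⟩
      · simpa [hl, tripRHS, BHSym.ofSym, BHSym.ofLab] using (derivesL_arc (G := G) ha hl).append_s7 hd
      · simp [hw]
    | none =>
      obtain ⟨c, y, hy⟩ := List.exists_cons_of_ne_nil
        (hn.of_cons.filterMap_lab_ne_nil (hn.ne_nil_of_cons_of_lab_eq_none hl))
      rw [hy] at hlen hd
      obtain ⟨m, qs, rfl⟩ := List.exists_cons_of_length_eq_add_one hlen
      obtain ⟨rs₁, rs₂, x₁, x₂, rfl, hx, h₁, h₂⟩ :=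
        DerivesL.split_append (α := [_]) (β := tripRHS m (y.map Sum.inl) qs) hd
      obtain ⟨rs₁', h₁', hw₁⟩ := derivesL_term_of_eps_arc ha hl h₁
      refine ⟨m :: qs, rs₁' ++ rs₂, by simp [hl, hy, hlen],
        by simpa only [List.getLastD_cons] using hlast, ?_, ?_⟩
      · simpa [hl, hy, ← hx, tripRHS, BHSym.ofSym] using h₁'.append_s7 h₂
      · simp [hw₁, ← hw, mul_assoc]

end BHGrammar

namespace BHGrammar

variable {T N Q K : Type*} [CommSemiring K] {G : WCFG T N K} {A : WFSA T Q K}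

theorem derivesL_tripRHS {α : List (T ⊕ N)} {rs : List (Rule T N K)} {x : List T}
    (hG : DerivesL G α rs x) {p q : Q} {as : List (Arc T Q K)} (hc : ChainFrom A p as q)
    (hn : EndsLabeled as) (hy : as.filterMap Arc.lab = x) :
    ∃ (qs : List Q) (rs' : List (Rule T (BHNT T N Q) K)),
      qs.length = α.length ∧ qs.getLastD p = q ∧
      DerivesL (BHGrammar G A) (tripRHS p α qs) rs' x ∧
      (rs'.map Rule.wt).prod = (rs.map Rule.wt).prod * (as.map Arc.wt).prod := by
  induction hG generalizing p q as with
  | refl x =>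
    subst hy
    obtain ⟨qs, rs', hlen, hlast, hd, hw⟩ := derivesL_tripRHS_of_chain (G := G) hc hn
    exact ⟨qs, rs', by simpa using hlen, hlast, hd, by simpa using hw⟩
  | @step _ _ r rs x hs _ ih =>
    obtain ⟨hr, z, δ, rfl, rfl⟩ := hs
    obtain ⟨qs, rs', hlen, hlast, hd, hw⟩ := ih hc hn hy
    obtain ⟨qs₁, qs₂, qs₃, rfl, h₁, h₂, h₃⟩ : ∃ qs₁ qs₂ qs₃, qs = qs₁ ++ qs₂ ++ qs₃ ∧
        qs₁.length = (z.map Sum.inl : List (T ⊕ N)).length ∧ qs₂.length = r.rhs.length ∧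
        qs₃.length = δ.length := by
      refine ⟨qs.take z.length, (qs.drop z.length).take r.rhs.length,
        (qs.drop z.length).drop r.rhs.length, by simp, ?_, ?_, ?_⟩ <;>
        simp only [List.length_append, List.length_map, List.length_take, List.length_drop]
          at hlen ⊢ <;> omega
    rw [List.append_assoc, List.append_assoc, tripRHS_append h₁, tripRHS_append h₂] at hd
    obtain ⟨rs₁, rs₂₃, x₁, x₂₃, rfl, rfl, d₁, d₂₃⟩ := hd.split_append
    obtain ⟨rs₂, rs₃, x₂, x₃, rfl, rfl, d₂, d₃⟩ := d₂₃.split_append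
    have dX := DerivesL.single (tripRule_mem hr h₂) d₂
    refine ⟨qs₁ ++ qs₂.getLastD (qs₁.getLastD p) :: qs₃, _, by simp [h₁, h₃],
      by simpa only [List.getLastD_append, List.getLastD_cons] using hlast,
      by rw [tripRHS_append h₁]; exact d₁.append_s7 (dX.append_s7 d₃), ?_⟩
    simp only [List.map_append, List.map_cons, List.prod_append, List.prod_cons] at hw ⊢
    rw [mul_assoc r.wt (rs.map Rule.wt).prod, ← hw]
    ring

theorem derivesL_bar_of_eps_chain {qI m q : Q} (hI : A.init qI ≠ 0) {as : List (Arc T Q K)}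
    (hc : ChainFrom A m as q) (hε : as.filterMap Arc.lab = [])
    {rs : List (Rule T (BHNT T N Q) K)} {x : List T}
    (h : DerivesL (BHGrammar G A) [.inr (.trip qI .bar m)] rs x) :
    ∃ rs', DerivesL (BHGrammar G A) [.inr (.trip qI .bar q)] rs' x ∧
      (rs'.map Rule.wt).prod = (rs.map Rule.wt).prod * (as.map Arc.wt).prod := by
  induction hc generalizing rs with
  | nil => exact ⟨rs, h, by simp⟩
  | @cons a as q ha _ ih =>
    have hl : a.lab = none := by cases hl : a.lab <;> simp_all
    rw [List.filterMap_cons_none hl] at hε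
    have hrhs := h.append_s7 (derivesL_arc (G := G) ha hl)
    rw [Option.toList_none, List.append_nil] at hrhs
    obtain ⟨rs', hd, hw⟩ := ih hε (.single (bar_subset ⟨qI, a.src, a.dst, hI, rfl⟩) hrhs)
    exact ⟨rs', hd, by simp [hw, mul_assoc]⟩

theorem derivesL_start {p m q : Q} (hI : A.init p ≠ 0) (hF : A.final q ≠ 0)
    {as : List (Arc T Q K)} (hc : ChainFrom A m as q) (hε : as.filterMap Arc.lab = [])
    {rs : List (Rule T (BHNT T N Q) K)} {x : List T}
    (h : DerivesL (BHGrammar G A) [.inr (.trip p (.nt G.start) m)] rs x) :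
    ∃ rs', DerivesL (BHGrammar G A) [.inr (BHGrammar G A).start] rs' x ∧
      (rs'.map Rule.wt).prod =
        A.init p * (rs.map Rule.wt).prod * (as.map Arc.wt).prod * A.final q := by
  obtain ⟨rs', hd, hw⟩ :=
    derivesL_bar_of_eps_chain hI hc hε (.single (exit_subset ⟨p, m, hI, rfl⟩) h)
  refine ⟨_, .single (start_subset ⟨p, q, hI, hF, rfl⟩) hd, ?_⟩
  simp only [List.map_cons, List.prod_cons, hw, one_mul]
  ring

end BHGrammar

theorem bar_hillel_complete_general
    {T N Q K : Type*} [CommSemiring K]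
    (G : WCFG T N K) (A : WFSA T Q K)
    (t : Deriv G G.start) (π : FSAPath A) (h : t.yield = π.yield) :
    ∃ d : Deriv (BHGrammar G A) (BHGrammar G A).start,
      d.yield = t.yield ∧ d.weight = t.weight * π.weight := by
  obtain ⟨core, tail, hsplit, hcore, htail⟩ := exists_endsLabeled_append_eps π.arcs
  obtain ⟨m, hc₁, hc₂⟩ := ChainFrom.split_append (hsplit ▸ π.chain)
  have hy : core.filterMap Arc.lab = t.yield := by
    rw [h, FSAPath.yield, hsplit, List.filterMap_append, htail, List.append_nil]
  obtain ⟨qs, rs, hlen, hlast, hd, hw⟩ := BHGrammar.derivesL_tripRHS t.ok hc₁ hcore hy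
  obtain ⟨q, rfl⟩ := List.length_eq_one_iff.mp hlen
  obtain rfl : q = m := hlast
  obtain ⟨rs', hd', hw'⟩ :=
    BHGrammar.derivesL_start π.src_init π.dst_final hc₂ htail hd
  refine ⟨⟨rs', t.yield, hd'⟩, rfl, ?_⟩
  simp only [DerivFrom.weight, FSAPath.weight, hw', hw, hsplit, List.map_append, List.prod_append]
  ring

/-- **Completeness.**  For every derivation `t` of `G` and every path `π` of
`A` with the same yield, the generalized Bar-Hillel grammar `G∩` has a
derivation with that yield and weight `w(t) ⊗ w(π)`. -/
theorem bar_hillel_complete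
    {T N Q K : Type*} [CommSemiring K] [Finite N] [Finite Q]
    (G : WCFG T N K) (A : WFSA T Q K) (hGfin : G.rules.Finite)
    (t : Deriv G G.start) (π : FSAPath A) (h : t.yield = π.yield) :
    ∃ d : Deriv (BHGrammar G A) (BHGrammar G A).start,
      d.yield = t.yield ∧ d.weight = t.weight * π.weight :=
  bar_hillel_complete_general G A t π h
end

section
/- Let Σ = {a, b}. Let A be the (Boolean-semiring) finite-state automaton with states {q0, q1, q2, q3}, arcs q0 --a--> q1, q1 --ε--> q2, q2 --b--> q3, sole initial state q0 and sole final state q3, and let G be the context-free grammar with rules S → A B, A → a, B → b. Then the intersection of the language of A and the language of G equals {ab}, yet the grammar produced from G and A by the original Bar-Hillel construction generates the empty language. -/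
/-- The two-element Boolean semiring `({false, true}, ∨, ∧, false, true)`. -/
inductive B2 : Type
  | fls : B2
  | tru : B2
  deriving DecidableEq

namespace B2
instance : Zero B2 := ⟨fls⟩
instance : One B2 := ⟨tru⟩
instance : Add B2 := ⟨fun a b => match a, b with | fls, b => b | tru, _ => tru⟩
instance : Mul B2 := ⟨fun a b => match a, b with | fls, _ => fls | tru, b => b⟩

/-- `B2` with disjunction as addition and conjunction as multiplication is a
commutative semiring: the Boolean semiring. -/
instance : CommSemiring B2 where
  add_assoc := by intro a b c; cases a <;> cases b <;> cases c <;> rfl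
  zero_add := by intro a; cases a <;> rfl
  add_zero := by intro a; cases a <;> rfl
  add_comm := by intro a b; cases a <;> cases b <;> rfl
  nsmul := nsmulRec
  mul_assoc := by intro a b c; cases a <;> cases b <;> cases c <;> rfl
  one_mul := by intro a; cases a <;> rfl
  mul_one := by intro a; cases a <;> rfl
  left_distrib := by intro a b c; cases a <;> cases b <;> cases c <;> rfl
  right_distrib := by intro a b c; cases a <;> cases b <;> cases c <;> rfl
  zero_mul := by intro a; cases a <;> rfl
  mul_zero := by intro a; cases a <;> rfl
  mul_comm := by intro a b; cases a <;> cases b <;> rfl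
end B2

/-- The alphabet `Σ = {a, b}`. -/
inductive TT : Type
  | a : TT
  | b : TT
  deriving DecidableEq

/-- The nonterminals `{S, A, B}`. -/
inductive NT3 : Type
  | S : NT3
  | A : NT3
  | B : NT3
  deriving DecidableEq

/-- The Boolean-semiring automaton with arcs
`q0 --a--> q1`, `q1 --ε--> q2`, `q2 --b--> q3`,
sole initial state `q0` and sole final state `q3`. -/
def exampleFSA : WFSA TT (Fin 4) B2 :=
  ⟨↑[(⟨0, some TT.a, 1, 1⟩ : Arc TT (Fin 4) B2),
     (⟨1, none, 1, 2⟩ : Arc TT (Fin 4) B2),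
     (⟨2, some TT.b, 1, 3⟩ : Arc TT (Fin 4) B2)],
   fun q => if q = 0 then 1 else 0,
   fun q => if q = 3 then 1 else 0⟩

/-- The grammar with rules `S → A B`, `A → a`, `B → b`. -/
def exampleCFG : WCFG TT NT3 B2 :=
  ⟨NT3.S,
   {(⟨NT3.S, [Sum.inr NT3.A, Sum.inr NT3.B], 1⟩ : Rule TT NT3 B2),
    (⟨NT3.A, [Sum.inl TT.a], 1⟩ : Rule TT NT3 B2),
    (⟨NT3.B, [Sum.inl TT.b], 1⟩ : Rule TT NT3 B2)}⟩

/-!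
Every accepting path of the automaton reads `ab`, and `S ⇒ AB ⇒ aB ⇒ ab`, so the intersection
is `{ab}`. The original construction has triplets `(p,a,q)` with `a ∈ Σ` only for arcs, while a
rule of schema (d) only chains triplets of grammar symbols, so `(q,ε,q')` never occurs on a
right-hand side. Hence a triplet `(p,X,q)` with `X ≠ ε` can derive a terminal string only if `q` is
reachable from `p` along non-ε arcs; in the example those arcs lead from `q0` only to `q1`, so
`(q0,S,q3)` is unproductive.
-/

open Relation

section Chains

variable {T Q K : Type*} {A : WFSA T Q K}

theorem ChainFrom.append_filterMap_lab {f : Q → List T}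
    (hf : ∀ a ∈ A.arcs, f a.src ++ a.lab.toList = f a.dst) {p q : Q} {as : List (Arc T Q K)}
    (h : ChainFrom A p as q) : f p ++ as.filterMap Arc.lab = f q := by
  induction h with
  | nil => simp
  | @cons a as q ha _ ih =>
    rw [← ih, ← hf a ha]
    cases hl : a.lab <;> simp [hl]

def WFSA.SymbolArc (A : WFSA T Q K) (p q : Q) : Prop :=
  ∃ a ∈ A.arcs, a.src = p ∧ a.lab.isSome ∧ a.dst = q

end Chains

section Unproductive

variable {T N K : Type*} {G : WCFG T N K}

def WCFG.Unproductive (G : WCFG T N K) (P : N → Prop) : Prop :=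
  ∀ r ∈ G.rules, P r.lhs → ∃ Z, Sum.inr Z ∈ r.rhs ∧ P Z

theorem DerivesL.not_of_unproductive {P : N → Prop} (hP : G.Unproductive P)
    {α : List (T ⊕ N)} {rs : List (Rule T N K)} {x : List T} (h : DerivesL G α rs x) :
    ∀ Y, Sum.inr Y ∈ α → ¬ P Y := by
  induction h with
  | refl x => simp
  | step hs _ ih =>
    obtain ⟨hr, z, δ, rfl, rfl⟩ := hs
    intro Y hY hYP
    simp only [List.mem_append, List.mem_map, List.mem_cons, reduceCtorEq, and_false,
      exists_false, false_or, Sum.inr.injEq] at hY ih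
    rcases hY with rfl | hY
    · obtain ⟨Z, hZ, hZP⟩ := hP _ hr hYP
      exact ih Z (Or.inl hZ) hZP
    · exact ih Y (Or.inr hY) hYP

theorem WCFG.Unproductive.isEmpty_deriv {P : N → Prop} (hP : G.Unproductive P) {X : N}
    (hX : P X) : IsEmpty (Deriv G X) :=
  ⟨fun d => d.ok.not_of_unproductive hP X (by simp) hX⟩

end Unproductive

section OriginalBarHillel

variable {T N Q K : Type*} [CommSemiring K]

theorem reflTransGen_getLastD_of_tripRHS {R : Q → Q → Prop} {syms : List (T ⊕ N)} {q₀ : Q}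
    {qs : List Q} (hlen : qs.length = syms.length)
    (h : ∀ p s q, Sum.inr (BHNT.trip p (BHSym.ofSym s) q) ∈ tripRHS q₀ syms qs →
      ReflTransGen R p q) :
    ReflTransGen R q₀ (qs.getLastD q₀) := by
  induction syms generalizing q₀ qs with
  | nil =>
    obtain rfl := List.length_eq_zero_iff.mp hlen
    exact .refl
  | cons s syms ih =>
    obtain _ | ⟨q, qs⟩ := qs
    · simp at hlen
    · simp only [tripRHS, List.mem_cons] at h
      rw [List.getLastD_cons]
      exact (h _ _ _ (Or.inl rfl)).trans
        (ih (Nat.succ_injective hlen) fun p s q hm => h p s q (Or.inr hm))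

/-- Triplets whose span cannot be crossed without an ε-arc, and the start symbol if no accepting
span can. -/
def OBHBlocked (A : WFSA T Q K) : BHNT T N Q → Prop
  | .start => ∀ qI qF, A.init qI ≠ 0 → A.final qF ≠ 0 → ¬ ReflTransGen A.SymbolArc qI qF
  | .trip p s q => s ≠ .eps ∧ ¬ ReflTransGen A.SymbolArc p q

theorem OBHGrammar.unproductive_blocked (G : WCFG T N K) (A : WFSA T Q K) :
    (OBHGrammar G A).Unproductive (OBHBlocked A) := by
  rintro r (((hr | hr) | hr) | hr) hblocked
  · obtain ⟨qI, qF, hI, hF, rfl⟩ := hr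
    exact ⟨_, List.mem_singleton_self _, nofun, hblocked qI qF hI hF⟩
  · obtain ⟨r₀, q₀, qs, -, -, hlen, rfl⟩ := hr
    by_contra! hfree
    refine hblocked.2 (reflTransGen_getLastD_of_tripRHS hlen fun p s q hm => ?_)
    by_contra hpq
    exact hfree _ hm ⟨by cases s <;> nofun, hpq⟩
  · obtain ⟨r₀, q, -, -, rfl⟩ := hr
    exact absurd .refl hblocked.2
  · obtain ⟨a, ha, rfl⟩ := hr
    cases hl : a.lab with
    | none => exact absurd (by rw [hl]; rfl) hblocked.1
    | some t => exact absurd (.single ⟨a, ha, rfl, by simp [hl], rfl⟩) hblocked.2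

theorem OBHGrammar.isEmpty_deriv_start {G : WCFG T N K} {A : WFSA T Q K}
    (h : ∀ qI qF, A.init qI ≠ 0 → A.final qF ≠ 0 → ¬ ReflTransGen A.SymbolArc qI qF) :
    IsEmpty (Deriv (OBHGrammar G A) BHNT.start) :=
  (OBHGrammar.unproductive_blocked G A).isEmpty_deriv (X := .start) h

end OriginalBarHillel

theorem mem_exampleFSA_arcs {a : Arc TT (Fin 4) B2} (h : a ∈ exampleFSA.arcs) :
    a = ⟨0, some TT.a, 1, 1⟩ ∨ a = ⟨1, none, 1, 2⟩ ∨ a = ⟨2, some TT.b, 1, 3⟩ := by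
  simpa [exampleFSA] using h

theorem exampleFSA_path_yield (π : FSAPath exampleFSA) : π.yield = [TT.a, TT.b] := by
  have hsrc : π.src = 0 := by simpa [exampleFSA] using π.src_init
  have hdst : π.dst = 3 := by simpa [exampleFSA] using π.dst_final
  have hf : ∀ a ∈ exampleFSA.arcs,
      ![[], [TT.a], [TT.a], [TT.a, TT.b]] a.src ++ a.lab.toList =
        ![[], [TT.a], [TT.a], [TT.a, TT.b]] a.dst := by
    intro a ha
    rcases mem_exampleFSA_arcs ha with rfl | rfl | rfl <;> rfl
  simpa [FSAPath.yield, hsrc, hdst] using π.chain.append_filterMap_lab hf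

theorem exampleFSA_not_reflTransGen_symbolArc (qI qF : Fin 4) (hI : exampleFSA.init qI ≠ 0)
    (hF : exampleFSA.final qF ≠ 0) : ¬ ReflTransGen exampleFSA.SymbolArc qI qF := by
  obtain rfl : qI = 0 := by simpa [exampleFSA] using hI
  obtain rfl : qF = 3 := by simpa [exampleFSA] using hF
  suffices ∀ q, ReflTransGen exampleFSA.SymbolArc 0 q → q = 0 ∨ q = 1 by
    simpa using this 3
  intro q h
  induction h with
  | refl => exact .inl rfl
  | tail _ hstep ih =>
    obtain ⟨a, ha, rfl, hlab, rfl⟩ := hstep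
    rcases mem_exampleFSA_arcs ha with rfl | rfl | rfl <;> simp_all

def examplePath : FSAPath exampleFSA where
  src := 0
  dst := 3
  arcs := [⟨0, some TT.a, 1, 1⟩, ⟨1, none, 1, 2⟩, ⟨2, some TT.b, 1, 3⟩]
  ne := by simp
  chain :=
    .cons (a := ⟨0, some TT.a, 1, 1⟩) (by simp [exampleFSA]) <|
    .cons (a := ⟨1, none, 1, 2⟩) (by simp [exampleFSA]) <|
    .cons (a := ⟨2, some TT.b, 1, 3⟩) (by simp [exampleFSA]) (.nil 3)
  src_init := by decide
  dst_final := by decide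

def exampleDeriv : Deriv exampleCFG exampleCFG.start where
  rules := [⟨NT3.S, [Sum.inr NT3.A, Sum.inr NT3.B], 1⟩, ⟨NT3.A, [Sum.inl TT.a], 1⟩,
    ⟨NT3.B, [Sum.inl TT.b], 1⟩]
  yield := [TT.a, TT.b]
  ok := .step ⟨by simp [exampleCFG], [], [], rfl, rfl⟩ <|
    .step ⟨by simp [exampleCFG], [], [Sum.inr NT3.B], rfl, rfl⟩ <|
    .step ⟨by simp [exampleCFG], [TT.a], [], rfl, rfl⟩ (.refl [TT.a, TT.b])

/-- The intersection of the language of the example automaton with the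
language of the example grammar is `{ab}`, yet the grammar produced by the
**original** Bar-Hillel construction generates the empty language. -/
theorem original_bar_hillel_failure_boolean :
    ({x : List TT | (∃ t : Deriv exampleCFG exampleCFG.start, t.yield = x) ∧
        (∃ π : FSAPath exampleFSA, π.yield = x)} = {[TT.a, TT.b]}) ∧
    ({x : List TT |
        ∃ d : Deriv (OBHGrammar exampleCFG exampleFSA) BHNT.start, d.yield = x}
      = ∅) := by
  refine ⟨Set.ext fun x => ⟨?_, ?_⟩, Set.eq_empty_of_forall_notMem ?_⟩
  · rintro ⟨-, π, rfl⟩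
    exact exampleFSA_path_yield π
  · rintro rfl
    exact ⟨⟨exampleDeriv, rfl⟩, examplePath, rfl⟩
  · rintro x ⟨d, -⟩
    exact (OBHGrammar.isEmpty_deriv_start exampleFSA_not_reflTransGen_symbolArc).false d
end

section
/- Let A be the WFSA over Σ = {a, b} and the semiring ℝ≥0∞ with states {q0, q1, q2}, arcs q0 --a/1--> q1, q1 --ε/(1/3)--> q1, q1 --b/1--> q2, λ(q0) = 1 and ρ(q2) = 1 (0 elsewhere), and let G be the WCFG with rules S → A B / 1, A → a / 1, B → b / 1. Then the grammar G∩ produced from G and A by the original Bar-Hillel construction has exactly one derivation with yield ab, and its weight is 1; hence L_{G∩}(ab) = 1, whereas L_G(ab) · L_A(ab) = 3/2. -/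
open scoped ENNReal

/-- The `ℝ≥0∞`-weighted automaton with arcs `q0 --a/1--> q1`,
`q1 --ε/(1/3)--> q1`, `q1 --b/1--> q2`, initial weight `1` at `q0` and final
weight `1` at `q2`. -/
noncomputable def loopFSA : WFSA TT (Fin 3) ℝ≥0∞ :=
  ⟨↑[(⟨0, some TT.a, 1, 1⟩ : Arc TT (Fin 3) ℝ≥0∞),
     (⟨1, none, 1/3, 1⟩ : Arc TT (Fin 3) ℝ≥0∞),
     (⟨1, some TT.b, 1, 2⟩ : Arc TT (Fin 3) ℝ≥0∞)],
   fun q => if q = 0 then 1 else 0,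
   fun q => if q = 2 then 1 else 0⟩

/-- The `ℝ≥0∞`-weighted grammar with rules `S → A B / 1`, `A → a / 1`,
`B → b / 1`. -/
def loopCFG : WCFG TT NT3 ℝ≥0∞ :=
  ⟨NT3.S,
   {(⟨NT3.S, [Sum.inr NT3.A, Sum.inr NT3.B], 1⟩ : Rule TT NT3 ℝ≥0∞),
    (⟨NT3.A, [Sum.inl TT.a], 1⟩ : Rule TT NT3 ℝ≥0∞),
    (⟨NT3.B, [Sum.inl TT.b], 1⟩ : Rule TT NT3 ℝ≥0∞)}⟩


/-!
In the original construction a triple `(p, s, q)` occurs on a right-hand side only when `s` is a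
symbol of a rule of `G`, never `ε`. So the ε-loop `q1 --ε/(1/3)--> q1` yields a rule
`(q1, ε, q1) → ε / (1/3)` whose left-hand side is unreachable, and the only derivation of `ab` is
`S ⇒ (q0,S,q2) ⇒ (q0,A,q1)(q1,B,q2) ⇒* ab`, of weight `1`. The automaton, in contrast, accepts
`ab` along the path `a ε^k b` for every `k`, of weight `3^(-k)`, and these weights sum to `3/2`.
-/

section LeftmostDerivations

variable {T N K : Type*} {G : WCFG T N K}

theorem derivesL_nil_iff {rs : List (Rule T N K)} {x : List T} :
    DerivesL G [] rs x ↔ rs = [] ∧ x = [] := by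
  constructor
  · intro h
    generalize hα : ([] : List (T ⊕ N)) = α at h
    cases h with
    | refl x => exact ⟨rfl, List.map_eq_nil_iff.mp hα.symm⟩
    | step hs _ =>
      obtain ⟨_, z, δ, rfl, _⟩ := hs
      simp at hα
  · rintro ⟨rfl, rfl⟩
    exact .refl []

theorem derivesL_inl_cons_iff {a : T} {α : List (T ⊕ N)} {rs : List (Rule T N K)}
    {x : List T} :
    DerivesL G (.inl a :: α) rs x ↔ ∃ x', x = a :: x' ∧ DerivesL G α rs x' := by
  constructor
  · generalize hβ : (Sum.inl a :: α : List (T ⊕ N)) = β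
    intro h
    induction h generalizing α with
    | refl x =>
      obtain _ | ⟨b, x'⟩ := x
      · simp at hβ
      · simp only [List.map_cons, List.cons.injEq, Sum.inl.injEq] at hβ
        obtain ⟨rfl, rfl⟩ := hβ
        exact ⟨x', rfl, .refl x'⟩
    | step hs _ ih =>
      obtain ⟨hr, z, δ, rfl, rfl⟩ := hs
      obtain _ | ⟨b, z⟩ := z
      · simp at hβ
      · simp only [List.map_cons, List.cons_append, List.cons.injEq, Sum.inl.injEq] at hβ
        obtain ⟨rfl, rfl⟩ := hβ
        obtain ⟨x', rfl, h'⟩ := ih rfl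
        exact ⟨x', rfl, .step ⟨hr, z, δ, rfl, rfl⟩ h'⟩
  · rintro ⟨x', rfl, h⟩
    induction h with
    | refl x' => exact .refl (a :: x')
    | step hs _ ih =>
      obtain ⟨hr, z, δ, rfl, rfl⟩ := hs
      exact .step ⟨hr, a :: z, δ, by simp, by simp⟩ ih

/- The rule condition is bracketed so that `simp` can first rewrite it with a list of the rules
with left side `X`; otherwise it unfolds the derivations of every rule, and recursive rules never
stop unfolding. -/
theorem derivesL_inr_cons_iff {X : N} {δ : List (T ⊕ N)} {rs : List (Rule T N K)}
    {x : List T} :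
    DerivesL G (.inr X :: δ) rs x ↔
      ∃ r, (r ∈ G.rules ∧ r.lhs = X) ∧ ∃ rs', rs = r :: rs' ∧ DerivesL G (r.rhs ++ δ) rs' x := by
  constructor
  · intro h
    generalize hα : (Sum.inr X :: δ : List (T ⊕ N)) = α at h
    cases h with
    | refl x => obtain _ | ⟨b, x⟩ := x <;> simp at hα
    | step hs hd =>
      obtain ⟨hr, _ | ⟨b, z⟩, δ', rfl, rfl⟩ := hs
      · simp only [List.map_nil, List.nil_append, List.cons.injEq, Sum.inr.injEq] at hα
        obtain ⟨rfl, rfl⟩ := hα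
        exact ⟨_, ⟨hr, rfl⟩, _, rfl, by simpa using hd⟩
      · simp at hα
  · rintro ⟨r, ⟨hr, rfl⟩, rs', rfl, hd⟩
    exact .step ⟨hr, [], δ, rfl, rfl⟩ hd

theorem DerivFrom.ext {α : List (T ⊕ N)} {d d' : DerivFrom G α} (hrules : d.rules = d'.rules)
    (hyield : d.yield = d'.yield) : d = d' := by
  cases d; cases d'
  cases hrules; cases hyield
  rfl

theorem DerivFrom.eq_of_derivesL_iff {α : List (T ⊕ N)} {rs₀ : List (Rule T N K)}
    {x₀ : List T} (h : ∀ rs x, DerivesL G α rs x ↔ rs = rs₀ ∧ x = x₀) (d : DerivFrom G α) :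
    d = ⟨rs₀, x₀, (h rs₀ x₀).2 ⟨rfl, rfl⟩⟩ := by
  obtain ⟨hrules, hyield⟩ := (h _ _).1 d.ok
  exact DerivFrom.ext hrules hyield

theorem tsum_weight_eq_of_derivesL_iff [CommSemiring K] [TopologicalSpace K]
    {α : List (T ⊕ N)} {rs₀ : List (Rule T N K)} {x₀ : List T}
    (h : ∀ rs x, DerivesL G α rs x ↔ rs = rs₀ ∧ x = x₀) :
    ∑' d : {d : DerivFrom G α // d.yield = x₀}, d.1.weight = (rs₀.map Rule.wt).prod := by
  rw [tsum_eq_single (⟨⟨rs₀, x₀, (h rs₀ x₀).2 ⟨rfl, rfl⟩⟩, rfl⟩ :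
      {d : DerivFrom G α // d.yield = x₀}) fun d hd =>
    (hd (Subtype.ext (DerivFrom.eq_of_derivesL_iff h d.1))).elim]
  rfl

end LeftmostDerivations

section Chains

variable {T Q K : Type*} {A : WFSA T Q K}

theorem chainFrom_nil_iff {p q : Q} : ChainFrom A p [] q ↔ p = q := by
  constructor
  · rintro ⟨⟩; rfl
  · rintro rfl; exact .nil p

theorem chainFrom_cons_iff {p q : Q} {a : Arc T Q K} {as : List (Arc T Q K)} :
    ChainFrom A p (a :: as) q ↔ a ∈ A.arcs ∧ a.src = p ∧ ChainFrom A a.dst as q := by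
  constructor
  · rintro ⟨⟩
    exact ⟨‹_›, rfl, ‹_›⟩
  · rintro ⟨ha, rfl, h⟩
    exact .cons ha h

end Chains

namespace LoopExample

noncomputable section

open Sum BHSym BHNT

abbrev loopOBH : WCFG TT (BHNT TT NT3 (Fin 3)) ℝ≥0∞ := OBHGrammar loopCFG loopFSA

abbrev OBHRule : Type := Rule TT (BHNT TT NT3 (Fin 3)) ℝ≥0∞

abbrev startRule : OBHRule := ⟨start, [inr (trip 0 (nt .S) 2)], 1⟩
abbrev ruleS (p q s : Fin 3) : OBHRule :=
  ⟨trip p (nt .S) s, [inr (trip p (nt .A) q), inr (trip q (nt .B) s)], 1⟩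
abbrev ruleA (p q : Fin 3) : OBHRule := ⟨trip p (nt .A) q, [inr (trip p (term .a) q)], 1⟩
abbrev ruleB (p q : Fin 3) : OBHRule := ⟨trip p (nt .B) q, [inr (trip p (term .b) q)], 1⟩
abbrev arcRuleA : OBHRule := ⟨trip 0 (term .a) 1, [inl .a], 1⟩
abbrev arcRuleEps : OBHRule := ⟨trip 1 eps 1, [], 1 / 3⟩
abbrev arcRuleB : OBHRule := ⟨trip 1 (term .b) 2, [inl .b], 1⟩

theorem mem_obhRulesStart_iff {r : OBHRule} :
    r ∈ obhRulesStart loopCFG loopFSA ↔ r = startRule := by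
  simp [obhRulesStart, loopFSA, loopCFG]

theorem mem_bhRulesCFG_iff {r : OBHRule} :
    r ∈ bhRulesCFG loopCFG loopFSA ↔
      (∃ p q s, r = ruleS p q s) ∨ (∃ p q, r = ruleA p q) ∨ (∃ p q, r = ruleB p q) := by
  constructor
  · rintro ⟨r₀, p, qs, hr₀, -, hlen, rfl⟩
    simp only [loopCFG, Set.mem_insert_iff, Set.mem_singleton_iff] at hr₀
    rcases hr₀ with rfl | rfl | rfl
    · obtain ⟨q, s, rfl⟩ : ∃ q s, qs = [q, s] := List.length_eq_two.mp hlen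
      exact .inl ⟨p, q, s, rfl⟩
    · obtain ⟨q, rfl⟩ : ∃ q, qs = [q] := List.length_eq_one_iff.mp hlen
      exact .inr (.inl ⟨p, q, rfl⟩)
    · obtain ⟨q, rfl⟩ : ∃ q, qs = [q] := List.length_eq_one_iff.mp hlen
      exact .inr (.inr ⟨p, q, rfl⟩)
  · rintro (⟨p, q, s, rfl⟩ | ⟨p, q, rfl⟩ | ⟨p, q, rfl⟩)
    · exact ⟨⟨.S, [inr .A, inr .B], 1⟩, p, [q, s], by simp [loopCFG], by simp, rfl, rfl⟩
    · exact ⟨⟨.A, [inl .a], 1⟩, p, [q], by simp [loopCFG], by simp, rfl, rfl⟩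
    · exact ⟨⟨.B, [inl .b], 1⟩, p, [q], by simp [loopCFG], by simp, rfl, rfl⟩

theorem bhRulesNil_eq_empty : bhRulesNil loopCFG loopFSA = ∅ := by
  ext r
  simp [bhRulesNil, loopCFG]

theorem mem_bhRulesArc_iff {r : OBHRule} :
    r ∈ bhRulesArc loopCFG loopFSA ↔ r = arcRuleA ∨ r = arcRuleEps ∨ r = arcRuleB := by
  simp [bhRulesArc, loopFSA, BHSym.ofLab, arcRuleA, arcRuleEps, arcRuleB]

theorem mem_loopOBH_rules_iff {r : OBHRule} :
    r ∈ loopOBH.rules ↔ r = startRule ∨ (∃ p q s, r = ruleS p q s) ∨ (∃ p q, r = ruleA p q) ∨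
      (∃ p q, r = ruleB p q) ∨ r = arcRuleA ∨ r = arcRuleEps ∨ r = arcRuleB := by
  simp only [loopOBH, OBHGrammar, Set.mem_union, mem_obhRulesStart_iff, mem_bhRulesCFG_iff,
    bhRulesNil_eq_empty, Set.mem_empty_iff_false, mem_bhRulesArc_iff, or_false, or_assoc]

section RulesByLeftSide

variable {r : OBHRule}

theorem loopOBH_lhs_eq_start_iff : r ∈ loopOBH.rules ∧ r.lhs = start ↔ r = startRule := by
  rw [mem_loopOBH_rules_iff]
  aesop

theorem loopOBH_lhs_eq_tripS_iff {p s : Fin 3} :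
    r ∈ loopOBH.rules ∧ r.lhs = trip p (nt .S) s ↔ ∃ q, r = ruleS p q s := by
  rw [mem_loopOBH_rules_iff]
  aesop

theorem loopOBH_lhs_eq_tripA_iff {p q : Fin 3} :
    r ∈ loopOBH.rules ∧ r.lhs = trip p (nt .A) q ↔ r = ruleA p q := by
  rw [mem_loopOBH_rules_iff]
  aesop

theorem loopOBH_lhs_eq_tripB_iff {p q : Fin 3} :
    r ∈ loopOBH.rules ∧ r.lhs = trip p (nt .B) q ↔ r = ruleB p q := by
  rw [mem_loopOBH_rules_iff]
  aesop

theorem loopOBH_lhs_eq_trip_term_a_iff {p q : Fin 3} :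
    r ∈ loopOBH.rules ∧ r.lhs = trip p (term .a) q ↔ p = 0 ∧ q = 1 ∧ r = arcRuleA := by
  rw [mem_loopOBH_rules_iff]
  aesop

theorem loopOBH_lhs_eq_trip_term_b_iff {p q : Fin 3} :
    r ∈ loopOBH.rules ∧ r.lhs = trip p (term .b) q ↔ p = 1 ∧ q = 2 ∧ r = arcRuleB := by
  rw [mem_loopOBH_rules_iff]
  aesop

end RulesByLeftSide

theorem derivesL_loopOBH_iff (rs : List OBHRule) (x : List TT) :
    DerivesL loopOBH [inr start] rs x ↔
      rs = [startRule, ruleS 0 1 2, ruleA 0 1, arcRuleA, ruleB 1 2, arcRuleB] ∧ x = [.a, .b] := by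
  simp [derivesL_inr_cons_iff, derivesL_inl_cons_iff, derivesL_nil_iff, loopOBH_lhs_eq_start_iff,
    loopOBH_lhs_eq_tripS_iff, loopOBH_lhs_eq_tripA_iff, loopOBH_lhs_eq_tripB_iff,
    loopOBH_lhs_eq_trip_term_a_iff, loopOBH_lhs_eq_trip_term_b_iff]

def loopCFGRule : NT3 → Rule TT NT3 ℝ≥0∞
  | .S => ⟨.S, [inr .A, inr .B], 1⟩
  | .A => ⟨.A, [inl .a], 1⟩
  | .B => ⟨.B, [inl .b], 1⟩

theorem loopCFG_lhs_eq_iff {r : Rule TT NT3 ℝ≥0∞} {X : NT3} :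
    r ∈ loopCFG.rules ∧ r.lhs = X ↔ r = loopCFGRule X := by
  cases X <;> aesop (add simp [loopCFG, loopCFGRule])

theorem derivesL_loopCFG_iff (rs : List (Rule TT NT3 ℝ≥0∞)) (x : List TT) :
    DerivesL loopCFG [inr loopCFG.start] rs x ↔
      rs = [loopCFGRule .S, loopCFGRule .A, loopCFGRule .B] ∧ x = [.a, .b] := by
  show DerivesL loopCFG [inr .S] rs x ↔ _
  simp [derivesL_inr_cons_iff, derivesL_inl_cons_iff, derivesL_nil_iff, loopCFG_lhs_eq_iff,
    loopCFGRule]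

def arcA : Arc TT (Fin 3) ℝ≥0∞ := ⟨0, some .a, 1, 1⟩
def arcEps : Arc TT (Fin 3) ℝ≥0∞ := ⟨1, none, 1 / 3, 1⟩
def arcB : Arc TT (Fin 3) ℝ≥0∞ := ⟨1, some .b, 1, 2⟩

theorem mem_loopFSA_arcs_iff {e : Arc TT (Fin 3) ℝ≥0∞} :
    e ∈ loopFSA.arcs ↔ e = arcA ∨ e = arcEps ∨ e = arcB := by
  simp [loopFSA, arcA, arcEps, arcB]

theorem chainFrom_two_iff {as : List (Arc TT (Fin 3) ℝ≥0∞)} {q : Fin 3} :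
    ChainFrom loopFSA 2 as q ↔ as = [] ∧ q = 2 := by
  cases as with
  | nil => simp [chainFrom_nil_iff, eq_comm]
  | cons e as =>
    simp only [chainFrom_cons_iff, reduceCtorEq, false_and, iff_false, not_and]
    intro he hsrc
    rcases mem_loopFSA_arcs_iff.1 he with rfl | rfl | rfl <;> simp [arcA, arcEps, arcB] at hsrc

theorem chainFrom_one_two_iff {as : List (Arc TT (Fin 3) ℝ≥0∞)} :
    ChainFrom loopFSA 1 as 2 ↔ ∃ k, as = List.replicate k arcEps ++ [arcB] := by
  induction as with
  | nil => simp [chainFrom_nil_iff]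
  | cons e as ih =>
    have hsplit : (∃ k, e :: as = List.replicate k arcEps ++ [arcB]) ↔
        e = arcB ∧ as = [] ∨ e = arcEps ∧ ∃ k, as = List.replicate k arcEps ++ [arcB] := by
      constructor
      · rintro ⟨_ | k, h⟩ <;> simp_all [List.replicate_succ]
      · rintro (⟨rfl, rfl⟩ | ⟨rfl, k, rfl⟩)
        exacts [⟨0, rfl⟩, ⟨k + 1, rfl⟩]
    rw [hsplit, chainFrom_cons_iff]
    constructor
    · rintro ⟨he, hsrc, hchain⟩
      rcases mem_loopFSA_arcs_iff.1 he with rfl | rfl | rfl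
      · simp [arcA] at hsrc
      · exact .inr ⟨rfl, ih.1 hchain⟩
      · exact .inl ⟨rfl, (chainFrom_two_iff.1 hchain).1⟩
    · rintro (⟨rfl, rfl⟩ | ⟨rfl, hk⟩)
      · exact ⟨mem_loopFSA_arcs_iff.2 (by simp), rfl, .nil 2⟩
      · exact ⟨mem_loopFSA_arcs_iff.2 (by simp), rfl, ih.2 hk⟩

theorem chainFrom_zero_two_iff {as : List (Arc TT (Fin 3) ℝ≥0∞)} :
    ChainFrom loopFSA 0 as 2 ↔ ∃ k, as = arcA :: (List.replicate k arcEps ++ [arcB]) := by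
  cases as with
  | nil => simp [chainFrom_nil_iff]
  | cons e as =>
    rw [chainFrom_cons_iff]
    constructor
    · rintro ⟨he, hsrc, hchain⟩
      rcases mem_loopFSA_arcs_iff.1 he with rfl | rfl | rfl
      · simpa using chainFrom_one_two_iff.1 hchain
      all_goals simp [arcEps, arcB] at hsrc
    · rintro ⟨k, h⟩
      simp only [List.cons.injEq] at h
      obtain ⟨rfl, rfl⟩ := h
      exact ⟨mem_loopFSA_arcs_iff.2 (by simp), rfl, chainFrom_one_two_iff.2 ⟨k, rfl⟩⟩

def loopPath (k : ℕ) : FSAPath loopFSA where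
  src := 0
  dst := 2
  arcs := arcA :: (List.replicate k arcEps ++ [arcB])
  ne := List.cons_ne_nil _ _
  chain := chainFrom_zero_two_iff.2 ⟨k, rfl⟩
  src_init := by simp [loopFSA]
  dst_final := by simp [loopFSA]

theorem loopPath_yield (k : ℕ) : (loopPath k).yield = [.a, .b] := by
  simp [loopPath, FSAPath.yield, arcA, arcEps, arcB]

theorem loopPath_weight (k : ℕ) : (loopPath k).weight = (1 / 3) ^ k := by
  simp [loopPath, FSAPath.weight, loopFSA, arcA, arcEps, arcB]

theorem loopPath_injective : Function.Injective loopPath := by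
  intro k l h
  simpa [loopPath] using congrArg (fun π => π.arcs.length) h

theorem exists_eq_loopPath (π : FSAPath loopFSA) : ∃ k, π = loopPath k := by
  obtain ⟨src, dst, as, -, hchain, hsrc, hdst⟩ := π
  obtain rfl : src = 0 := by simpa [loopFSA] using hsrc
  obtain rfl : dst = 2 := by simpa [loopFSA] using hdst
  obtain ⟨k, rfl⟩ := chainFrom_zero_two_iff.1 hchain
  exact ⟨k, rfl⟩

theorem tsum_one_div_three_pow : ∑' k : ℕ, (1 / 3 : ℝ≥0∞) ^ k = 3 / 2 := by
  have h : (1 : ℝ≥0∞) - 3⁻¹ = 2 / 3 := by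
    rw [ENNReal.sub_eq_of_eq_add (by simp)]
    rw [div_eq_mul_inv, ← add_one_mul, two_add_one_eq_three, ENNReal.mul_inv_cancel] <;> norm_num
  rw [ENNReal.tsum_geometric, one_div, h, ENNReal.inv_div] <;> simp

theorem tsum_weight_loopFSA_ab :
    ∑' π : {π : FSAPath loopFSA // π.yield = [.a, .b]}, π.1.weight = 3 / 2 := by
  let e : ℕ ≃ {π : FSAPath loopFSA // π.yield = [.a, .b]} :=
    Equiv.ofBijective (fun k => ⟨loopPath k, loopPath_yield k⟩)
      ⟨fun k l h => loopPath_injective (congrArg Subtype.val h),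
       fun π => (exists_eq_loopPath π.1).imp fun _ hk => Subtype.ext hk.symm⟩
  rw [← e.tsum_eq]
  show ∑' k, (loopPath k).weight = 3 / 2
  simpa only [loopPath_weight] using tsum_one_div_three_pow

end

end LoopExample

open LoopExample

/-- The grammar produced by the **original** Bar-Hillel construction from
`loopCFG` and `loopFSA` has exactly one derivation with yield `ab`, and its
weight is `1`; hence `L_{G∩}(ab) = 1`, whereas
`L_G(ab) · L_A(ab) = 1 · 3/2 = 3/2`. -/
theorem original_bar_hillel_failure_weights :
    (∃ d : Deriv (OBHGrammar loopCFG loopFSA) BHNT.start,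
        d.yield = [TT.a, TT.b] ∧ d.weight = 1 ∧
        ∀ d' : Deriv (OBHGrammar loopCFG loopFSA) BHNT.start,
          d'.yield = [TT.a, TT.b] → d' = d) ∧
    (∑' d : {d : Deriv (OBHGrammar loopCFG loopFSA) BHNT.start //
          d.yield = [TT.a, TT.b]}, d.1.weight) = 1 ∧
    (∑' t : {t : Deriv loopCFG loopCFG.start // t.yield = [TT.a, TT.b]},
        t.1.weight) *
      (∑' π : {π : FSAPath loopFSA // π.yield = [TT.a, TT.b]}, π.1.weight)
      = (3/2 : ℝ≥0∞) := by
  refine ⟨⟨⟨_, _, (derivesL_loopOBH_iff _ _).2 ⟨rfl, rfl⟩⟩, rfl, ?_,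
    fun d _ => DerivFrom.eq_of_derivesL_iff derivesL_loopOBH_iff d⟩, ?_, ?_⟩
  · simp [DerivFrom.weight]
  · rw [tsum_weight_eq_of_derivesL_iff derivesL_loopOBH_iff]
    simp
  · rw [tsum_weight_eq_of_derivesL_iff derivesL_loopCFG_iff, tsum_weight_loopFSA_ab]
    simp [loopCFGRule]
end
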